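/- arXiv:1908.11428 — 3 statements merged into one kernel-verified Lean document; each statement's English description precedes it below -/
import Mathlib

section
/- Let F be a controller for blocklength n, let F̃ be its (*,γ)-modification and, for a type T ∈ 𝒯^n, let F̃_T be its (T,γ)-modification, and let P := F∘W, P_* := F̃∘W and P_T := F̃_T∘W denote the induced distributions on (𝒳×𝒴)^n. Then for every event ℰ ⊆ (𝒳×𝒴)^n: P(ℰ ∩ {φ_W(X^n) ≤ γ}) ≤ P_*(ℰ) and P(ℰ ∩ {P_{X^n} = T}) ≤ P_T(ℰ). -/
open MeasureTheory Real Filter Set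
open scoped BigOperators ENNReal Classical

noncomputable section

namespace Paper

variable {X Y : Type*} [Fintype X] [Fintype Y]

/-- `P` is a probability mass function on the finite alphabet `X`. -/
def IsDist (P : X → ℝ) : Prop := (∀ x, 0 ≤ P x) ∧ ∑ x, P x = 1

/-- `W` is a discrete memoryless channel (a stochastic matrix). -/
def IsChannel (W : X → Y → ℝ) : Prop := ∀ x, IsDist (W x)

/-- `W` has no all-zero column. -/
def NoZeroColumn (W : X → Y → ℝ) : Prop := ∀ y, ∃ x, 0 < W x y

/-- Output distribution induced by input distribution `P` through `W`. -/
def outDist (P : X → ℝ) (W : X → Y → ℝ) (y : Y) : ℝ := ∑ x, P x * W x y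

/-- Mutual information `I(P; W)` (in nats). -/
def mutInfo (P : X → ℝ) (W : X → Y → ℝ) : ℝ :=
  ∑ x, ∑ y, P x * W x y * Real.log (W x y / outDist P W y)

/-- Shannon capacity `C`. -/
def capacity (W : X → Y → ℝ) : ℝ :=
  sSup {c | ∃ P, IsDist P ∧ mutInfo P W = c}

/-- The set of capacity-achieving input distributions `Π*`. -/
def capacityAchievers (W : X → Y → ℝ) : Set (X → ℝ) :=
  {P | IsDist P ∧ mutInfo P W = capacity W}

/-- The (unique) capacity-achieving output distribution `q*`. -/
def qStar (W : X → Y → ℝ) : Y → ℝ :=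
  if h : (capacityAchievers W).Nonempty then outDist h.choose W else fun _ => 0

/-- The information density `i*(x,y) = log (W(y|x)/q*(y))`. -/
def iStar (W : X → Y → ℝ) (x : X) (y : Y) : ℝ := Real.log (W x y / qStar W y)

/-- `ν_x = Var[i*(x,Y)]`, `Y ~ W(·|x)`. -/
def nu (W : X → Y → ℝ) (x : X) : ℝ :=
  ∑ y, W x y * (iStar W x y) ^ 2 - (∑ y, W x y * iStar W x y) ^ 2

/-- `V_min`. -/
def Vmin (W : X → Y → ℝ) : ℝ :=
  sInf {v | ∃ P ∈ capacityAchievers W, v = ∑ x, P x * nu W x}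

/-- `V_max`. -/
def Vmax (W : X → Y → ℝ) : ℝ :=
  sSup {v | ∃ P ∈ capacityAchievers W, v = ∑ x, P x * nu W x}

/-- `V_ε`. -/
def Veps (W : X → Y → ℝ) (ε : ℝ) : ℝ := if ε < 1/2 then Vmin W else Vmax W

/-- `ν_min = min_x ν_x`. -/
def numin (W : X → Y → ℝ) [Nonempty X] : ℝ := ⨅ x, nu W x

/-- `ν_max = max_x ν_x`. -/
def numax (W : X → Y → ℝ) [Nonempty X] : ℝ := ⨆ x, nu W x

/-- Average error probability of the feedback code `(enc, dec)` with `M` messages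
and blocklength `n`. -/
def errProb (W : X → Y → ℝ) (n M : ℕ) (enc : Fin M → List Y → X)
    (dec : (Fin n → Y) → Fin M) : ℝ :=
  (M : ℝ)⁻¹ * ∑ m : Fin M, ∑ y : Fin n → Y,
    (∏ k : Fin n, W (enc m ((List.ofFn y).take (k : ℕ))) (y k)) *
      (if dec y = m then 0 else 1)

/-- Minimum average error probability of `(n,R)` feedback codes. -/
def minErr (W : X → Y → ℝ) (n : ℕ) (R : ℝ) : ℝ :=
  sInf {e | ∃ enc dec, e = errProb W n ⌈Real.exp (n * R)⌉₊ enc dec}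

/-- `M*_fb(n, ε)`. -/
def Mfb (W : X → Y → ℝ) (n : ℕ) (ε : ℝ) : ℝ :=
  sSup {m | ∃ R : ℝ, m = (⌈Real.exp (n * R)⌉₊ : ℝ) ∧ minErr W n R ≤ ε}

/-- Standard Gaussian density `φ`. -/
def gpdf (u : ℝ) : ℝ := (Real.sqrt (2 * Real.pi))⁻¹ * Real.exp (-u ^ 2 / 2)

/-- Standard Gaussian CDF `Φ`. -/
def gcdf (t : ℝ) : ℝ := ∫ u in Set.Iic t, gpdf u

/-- Inverse Gaussian CDF `Φ⁻¹`. -/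
def gcdfInv : ℝ → ℝ := Function.invFun gcdf

/-- The sequence `(log M*_fb(n,ε) - nC)/√n` whose liminf/limsup is the
second-order coding rate with feedback. -/
def SOfb (W : X → Y → ℝ) (ε : ℝ) (n : ℕ) : ℝ :=
  (Real.log (Mfb W n ε) - n * capacity W) / Real.sqrt n

/-- A controller `F : (𝒳×𝒴)* → P(𝒳)` (history in chronological order). -/
def Controller (X Y : Type*) : Type _ := List (X × Y) → X → ℝ

/-- `F` assigns a probability distribution on `X` to every history. -/
def IsController (F : Controller X Y) : Prop := ∀ l, IsDist (F l)

/-- The history `(x_1,y_1),…,(x_k,y_k)`. -/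
def hist {n : ℕ} (x : Fin n → X) (y : Fin n → Y) (k : ℕ) : List (X × Y) :=
  (List.ofFn fun j : Fin n => (x j, y j)).take k

/-- `(F∘W)(x^n, y^n) = Π_k F(x_k|x^{k-1},y^{k-1}) W(y_k|x_k)`. -/
def ctrlProb (F : Controller X Y) (W : X → Y → ℝ) (n : ℕ)
    (x : Fin n → X) (y : Fin n → Y) : ℝ :=
  ∏ k : Fin n, F (hist x y (k : ℕ)) (x k) * W (x k) (y k)

/-- Probability of an event under `F∘W`. -/
def ctrlPr (F : Controller X Y) (W : X → Y → ℝ) (n : ℕ)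
    (E : Set ((Fin n → X) × (Fin n → Y))) : ℝ :=
  ∑ x : Fin n → X, ∑ y : Fin n → Y, if (x, y) ∈ E then ctrlProb F W n x y else 0

/-- The output marginal `FW(y^n)`. -/
def FWout (F : Controller X Y) (W : X → Y → ℝ) (n : ℕ) (y : Fin n → Y) : ℝ :=
  ∑ x : Fin n → X, ctrlProb F W n x y

/-- `FW(y^k)`: the probability that the first `k` outputs agree with `y`. -/
def FWpref (F : Controller X Y) (W : X → Y → ℝ) (n : ℕ) (y : Fin n → Y) (k : ℕ) : ℝ :=
  ∑ y' : Fin n → Y, if (∀ j : Fin n, (j : ℕ) < k → y' j = y j) then FWout F W n y' else 0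

/-- The conditional output probability `FW(y_{k+1}|y^k)` (`k` is 0-indexed here). -/
def FWcond (F : Controller X Y) (W : X → Y → ℝ) (n : ℕ) (y : Fin n → Y) (k : ℕ) : ℝ :=
  FWpref F W n y (k + 1) / FWpref F W n y k

/-- `q(y^k)` for `q ∈ P(𝒴^n)`. -/
def qpref (n : ℕ) (q : (Fin n → Y) → ℝ) (y : Fin n → Y) (k : ℕ) : ℝ :=
  ∑ y' : Fin n → Y, if (∀ j : Fin n, (j : ℕ) < k → y' j = y j) then q y' else 0

/-- The conditional probability `q(y_{k+1}|y^k)` (`k` is 0-indexed here). -/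
def qcond (n : ℕ) (q : (Fin n → Y) → ℝ) (y : Fin n → Y) (k : ℕ) : ℝ :=
  qpref n q y (k + 1) / qpref n q y k

/-- The type (empirical distribution) of `x^n`. -/
def typeOf (n : ℕ) (z : Fin n → X) (a : X) : ℝ :=
  (n : ℝ)⁻¹ * ∑ k : Fin n, if z k = a then 1 else 0

/-- Total variation distance between two distributions on `X`. -/
def dTV (P Q : X → ℝ) : ℝ := 1 / 2 * ∑ x, |P x - Q x|

/-- `φ_W(x^n) = inf_{P ∈ Π*} d_TV(P, P_{x^n})`. -/
def phiW (W : X → Y → ℝ) (n : ℕ) (z : Fin n → X) : ℝ :=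
  sInf {d | ∃ P ∈ capacityAchievers W, d = dTV P (typeOf n z)}

/-- Point mass at `x₀`. -/
def pointMass (x0 : X) : X → ℝ := fun x => if x = x0 then 1 else 0

/-- `Q|_A`: `Q` conditioned on `A` (point mass at `x₀` if `Q(A) = 0`). -/
def restrictDist (Q : X → ℝ) (A : Set X) (x0 : X) : X → ℝ :=
  if (∑ x', if x' ∈ A then Q x' else 0) = 0 then pointMass x0
  else fun x => (if x ∈ A then Q x else 0) / ∑ x', if x' ∈ A then Q x' else 0

/-- The modified controller: at history `l` of length `< n`, condition `F l` on
the allowed continuations `G (l.map Prod.fst)`; fall back to the point mass at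
`x₀` beyond time `n` or when `F l` puts no mass on the allowed set. -/
def modController (F : Controller X Y) (n : ℕ) (G : List X → Set X) (x0 : X) :
    Controller X Y :=
  fun l => if n ≤ l.length then pointMass x0
    else restrictDist (F l) (G (l.map Prod.fst)) x0

/-- `𝒳_{x^k}` for the `(*,γ)`-modification: symbols `a` such that `x^k a` is a
prefix of some `x^n` whose type is within total variation `γ` of `Π*`. -/
def goodSetStar (W : X → Y → ℝ) (n : ℕ) (γ : ℝ) (xs : List X) : Set X :=
  {a | ∃ z : Fin n → X, phiW W n z ≤ γ ∧ (xs ++ [a]) <+: List.ofFn z}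

/-- `𝒳_{x^k}` for the `(T,γ)`-modification: symbols `a` such that `x^k a` is a
prefix of some `x^n` of type `T`. -/
def goodSetType (n : ℕ) (T : X → ℝ) (xs : List X) : Set X :=
  {a | ∃ z : Fin n → X, typeOf n z = T ∧ (xs ++ [a]) <+: List.ofFn z}

lemma restrictDist_nonneg (Q : X → ℝ) (hQ : ∀ x, 0 ≤ Q x) (A : Set X) (x0 x : X) :
    0 ≤ restrictDist Q A x0 x := by
  unfold restrictDist
  split_ifs with h
  · unfold pointMass; positivity
  · have hS : 0 ≤ ∑ x', if x' ∈ A then Q x' else 0 := by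
      apply Finset.sum_nonneg; intro i _; split_ifs <;> [exact hQ i; exact le_rfl]
    apply div_nonneg _ hS
    split_ifs <;> [exact hQ x; exact le_rfl]

lemma le_restrictDist (Q : X → ℝ) (hQ : IsDist Q) (A : Set X) (x0 : X) {a : X}
    (ha : a ∈ A) : Q a ≤ restrictDist Q A x0 a := by
  set S := ∑ x', if x' ∈ A then Q x' else 0 with hSdef
  have hS0 : 0 ≤ S := by
    apply Finset.sum_nonneg; intro i _; split_ifs <;> [exact hQ.1 i; exact le_rfl]
  have hS1 : S ≤ 1 := by
    rw [← hQ.2]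
    apply Finset.sum_le_sum; intro i _; split_ifs <;> [exact le_rfl; exact hQ.1 i]
  unfold restrictDist
  split_ifs with h
  · have : Q a = 0 := by
      have := (Finset.sum_eq_zero_iff_of_nonneg (by
        intro i _; split_ifs <;> [exact hQ.1 i; exact le_rfl])).mp h a (Finset.mem_univ a)
      simpa [ha] using this
    rw [this]; unfold pointMass; positivity
  · have hSpos : 0 < S := lt_of_le_of_ne hS0 (Ne.symm h)
    show Q a ≤ (if a ∈ A then Q a else 0) / S
    rw [if_pos ha]
    rw [le_div_iff₀ hSpos]
    calc Q a * S ≤ Q a * 1 := mul_le_mul_of_nonneg_left hS1 (hQ.1 a)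
    _ = Q a := mul_one _

lemma modController_nonneg (F : Controller X Y) (hF : IsController F)
    (n : ℕ) (G : List X → Set X) (x0 : X) (l : List (X × Y)) (x : X) :
    0 ≤ modController F n G x0 l x := by
  unfold modController
  split_ifs with h
  · unfold pointMass; positivity
  · exact restrictDist_nonneg _ (hF l).1 _ _ _

lemma hist_map_fst {n : ℕ} (x : Fin n → X) (y : Fin n → Y) (k : ℕ) :
    (hist x y k).map Prod.fst = (List.ofFn x).take k := by
  unfold hist
  rw [List.map_take, List.map_ofFn]
  rfl

lemma take_append_prefix {n : ℕ} (x : Fin n → X) (k : Fin n) :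
    ((List.ofFn x).take (k : ℕ) ++ [x k]) <+: List.ofFn x := by
  have hlen : (k : ℕ) < (List.ofFn x).length := by simp [k.is_lt]
  have h1 : (List.ofFn x).take ((k : ℕ) + 1)
      = (List.ofFn x).take (k : ℕ) ++ [x k] := by
    rw [List.take_succ]
    congr 1
    rw [List.getElem?_eq_getElem hlen]
    simp [List.getElem_ofFn]
  rw [← h1]
  exact List.take_prefix _ _

/-- Generic pointwise domination for the modified controller. -/
lemma ctrlProb_le_mod (F : Controller X Y) (hF : IsController F)
    (W : X → Y → ℝ) (hW : IsChannel W) (n : ℕ) (G : List X → Set X) (x0 : X)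
    (x : Fin n → X) (y : Fin n → Y)
    (hx : ∀ k : Fin n, x k ∈ G ((List.ofFn x).take (k : ℕ))) :
    ctrlProb F W n x y ≤ ctrlProb (modController F n G x0) W n x y := by
  unfold ctrlProb
  apply Finset.prod_le_prod
  · intro k _
    exact mul_nonneg ((hF _).1 _) ((hW _).1 _)
  · intro k _
    apply mul_le_mul_of_nonneg_right _ ((hW _).1 _)
    have hlen : (hist x y (k : ℕ)).length = (k : ℕ) := by
      unfold hist; simp [List.length_take, Nat.min_eq_left (le_of_lt k.is_lt)]
    unfold modController
    rw [if_neg (by rw [hlen]; exact not_le.mpr k.is_lt)]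
    rw [hist_map_fst]
    exact le_restrictDist _ (hF _) _ _ (hx k)

/-- Generic summed domination. -/
lemma ctrlPr_le_mod (F : Controller X Y) (hF : IsController F)
    (W : X → Y → ℝ) (hW : IsChannel W) (n : ℕ) (G : List X → Set X) (x0 : X)
    (Good : (Fin n → X) → Prop)
    (hG : ∀ x : Fin n → X, Good x → ∀ k : Fin n, x k ∈ G ((List.ofFn x).take (k : ℕ)))
    (E : Set ((Fin n → X) × (Fin n → Y))) :
    ctrlPr F W n (E ∩ {p | Good p.1}) ≤ ctrlPr (modController F n G x0) W n E := by
  unfold ctrlPr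
  apply Finset.sum_le_sum; intro x _
  apply Finset.sum_le_sum; intro y _
  have hmodnn : 0 ≤ ctrlProb (modController F n G x0) W n x y := by
    unfold ctrlProb
    apply Finset.prod_nonneg; intro k _
    exact mul_nonneg (modController_nonneg F hF n G x0 _ _) ((hW _).1 _)
  by_cases hxy : (x, y) ∈ E ∩ {p | Good p.1}
  · rw [if_pos hxy, if_pos hxy.1]
    exact ctrlProb_le_mod F hF W hW n G x0 x y (hG x hxy.2)
  · rw [if_neg hxy]
    split_ifs <;> [exact hmodnn; exact le_rfl]

/-- Lemma 5: the modified-code distributions dominate the original one on the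
corresponding constant-composition events. -/
theorem modified_controller_domination
    {X Y : Type*} [Fintype X] [Fintype Y]
    (W : X → Y → ℝ) (hW : IsChannel W) (hcol : NoZeroColumn W)
    (n : ℕ) (γ : ℝ) (x0 : X)
    (F : Controller X Y) (hF : IsController F)
    (T : X → ℝ) (hT : ∃ z : Fin n → X, typeOf n z = T)
    (E : Set ((Fin n → X) × (Fin n → Y))) :
    ctrlPr F W n (E ∩ {p | phiW W n p.1 ≤ γ}) ≤
      ctrlPr (modController F n (goodSetStar W n γ) x0) W n E ∧
    ctrlPr F W n (E ∩ {p | typeOf n p.1 = T}) ≤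
      ctrlPr (modController F n (goodSetType n T) x0) W n E := by
  refine ⟨ctrlPr_le_mod F hF W hW n (goodSetStar W n γ) x0 (fun z => phiW W n z ≤ γ)
      (fun x hx k => ⟨x, hx, take_append_prefix x k⟩) E,
    ctrlPr_le_mod F hF W hW n (goodSetType n T) x0 (fun z => typeOf n z = T)
      (fun x hx k => ⟨x, hx, take_append_prefix x k⟩) E⟩

end Paper
end
end

section
/- (Capacity scaling for very noisy channels.) There exist a constant K > 0 and ζ₀ > 0, depending only on λ_max, |𝒳| and |𝒴|, such that for all ζ ∈ (0, ζ₀): |C_ζ − ζ²·𝐂| ≤ K·ζ³, where C_ζ is the capacity of W_ζ and 𝐂 := max_{P∈P(𝒳)} (1/2) Σ_{y∈𝒴} Γ(y)·( Σ_{x∈𝒳} P(x)λ²(x,y) − (Σ_{x∈𝒳} P(x)λ(x,y))² ). -/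
open MeasureTheory Real Filter Set
open scoped BigOperators ENNReal Classical

noncomputable section

namespace Paper

variable {X Y : Type*} [Fintype X] [Fintype Y]

/-- The very noisy channel `W_ζ(y|x) = Γ(y)(1 + ζ λ(x,y))`. -/
def VNC (Γ : Y → ℝ) (lam : X → Y → ℝ) (ζ : ℝ) : X → Y → ℝ :=
  fun x y => Γ y * (1 + ζ * lam x y)

/-- The constant `𝐂` governing the very noisy capacity. -/
def bigC (Γ : Y → ℝ) (lam : X → Y → ℝ) : ℝ :=
  sSup {c | ∃ P : X → ℝ, IsDist P ∧ c = 1 / 2 * ∑ y, Γ y *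
    ((∑ x, P x * lam x y ^ 2) - (∑ x, P x * lam x y) ^ 2)}


/-- Taylor estimate for `log (1+t)` of order 2. -/
lemma log_taylor2 {t : ℝ} (ht : |t| ≤ 1/2) :
    |Real.log (1+t) - (t - t^2/2)| ≤ 2*|t|^3 := by
  have h1 : |(-t)| < 1 := by rw [abs_neg]; linarith
  have key := Real.abs_log_sub_add_sum_range_le h1 2
  have he : (∑ i ∈ Finset.range 2, (-t) ^ (i + 1) / (i + 1)) = -t + t^2/2 := by
    simp [Finset.sum_range_succ]; ring
  rw [he, abs_neg] at key
  have h2 : 1 - (-t) = 1 + t := by ring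
  rw [h2] at key
  have h3 : |t| ^ 3 / (1 - |t|) ≤ 2 * |t|^3 := by
    rw [div_le_iff₀ (by linarith)]
    nlinarith [pow_nonneg (abs_nonneg t) 3, abs_nonneg t]
  calc |Real.log (1+t) - (t - t^2/2)| = |(-t + t^2/2) + Real.log (1+t)| := by
        congr 1; ring
    _ ≤ |t|^3 / (1 - |t|) := key
    _ ≤ 2*|t|^3 := h3

/-- Taylor estimate for `(1+t) log (1+t)` of order 2. -/
lemma F_taylor {t : ℝ} (ht : |t| ≤ 1/2) :
    |(1+t)*Real.log (1+t) - (t + t^2/2)| ≤ 4*|t|^3 := by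
  have h := log_taylor2 ht
  have habs := abs_le.1 ht
  have key : (1+t)*Real.log (1+t) - (t + t^2/2)
      = (1+t)*(Real.log (1+t) - (t - t^2/2)) - t^3/2 := by ring
  rw [key]
  have h2 : |(1+t)*(Real.log (1+t) - (t - t^2/2))| ≤ (3/2) * (2*|t|^3) := by
    rw [abs_mul]
    have : |1+t| ≤ 3/2 := by rw [abs_le]; constructor <;> linarith
    exact mul_le_mul this h (abs_nonneg _) (by norm_num)
  calc |(1+t)*(Real.log (1+t) - (t - t^2/2)) - t^3/2|
      ≤ |(1+t)*(Real.log (1+t) - (t - t^2/2))| + |t^3/2| := abs_sub _ _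
    _ ≤ (3/2)*(2*|t|^3) + |t|^3/2 := by
        refine add_le_add h2 ?_
        rw [abs_div, abs_pow]; norm_num
    _ ≤ 4*|t|^3 := by nlinarith [pow_nonneg (abs_nonneg t) 3]

/-- Quantitative second-order expansion of the mutual information of a
very noisy channel. -/
lemma mutInfo_VNC_est {X Y : Type*} [Fintype X] [Fintype Y]
    (Γ : Y → ℝ) (hΓ : IsDist Γ) (hΓpos : ∀ y, 0 < Γ y)
    (lam : X → Y → ℝ) (Λ : ℝ) (hΛ : ∀ x y, |lam x y| ≤ Λ)
    (P : X → ℝ) (hP : IsDist P) (ζ : ℝ) (hζ : 0 < ζ) (hζΛ : ζ * Λ ≤ 1/2) :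
    |mutInfo P (VNC Γ lam ζ) -
      ζ^2 * (1/2 * ∑ y, Γ y * ((∑ x, P x * lam x y ^ 2) - (∑ x, P x * lam x y)^2))|
      ≤ 8*Λ^3*ζ^3 := by
  set μ : Y → ℝ := fun y => ∑ x, P x * lam x y with hμdef
  have hb : ∀ (x : X) (y : Y), |ζ * lam x y| ≤ ζ * Λ := by
    intro x y
    rw [abs_mul, abs_of_pos hζ]
    exact mul_le_mul_of_nonneg_left (hΛ x y) hζ.le
  have hμb : ∀ y, |μ y| ≤ Λ := by
    intro y
    calc |μ y| ≤ ∑ x, |P x * lam x y| := Finset.abs_sum_le_sum_abs _ _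
      _ ≤ ∑ x, P x * Λ := by
          refine Finset.sum_le_sum fun x _ => ?_
          rw [abs_mul, abs_of_nonneg (hP.1 x)]
          exact mul_le_mul_of_nonneg_left (hΛ x y) (hP.1 x)
      _ = Λ := by rw [← Finset.sum_mul, hP.2, one_mul]
  have hbμ : ∀ y, |ζ * μ y| ≤ ζ * Λ := by
    intro y
    rw [abs_mul, abs_of_pos hζ]
    exact mul_le_mul_of_nonneg_left (hμb y) hζ.le
  have hb2 : ∀ (x : X) (y : Y), |ζ * lam x y| ≤ 1/2 := fun x y => (hb x y).trans hζΛ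
  have hbμ2 : ∀ y, |ζ * μ y| ≤ 1/2 := fun y => (hbμ y).trans hζΛ
  have hpos1 : ∀ (x : X) (y : Y), 0 < 1 + ζ * lam x y := by
    intro x y; have := (abs_le.1 (hb2 x y)).1; linarith
  have hpos2 : ∀ y, 0 < 1 + ζ * μ y := by
    intro y; have := (abs_le.1 (hbμ2 y)).1; linarith
  have hrow : ∀ y, ∑ x, P x * (1 + ζ * lam x y) = 1 + ζ * μ y := by
    intro y
    have h : ∀ x ∈ Finset.univ, P x * (1 + ζ * lam x y)
        = P x + ζ * (P x * lam x y) := fun x _ => by ring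
    rw [Finset.sum_congr rfl h, Finset.sum_add_distrib, hP.2, ← Finset.mul_sum]
  have hout : ∀ y, outDist P (VNC Γ lam ζ) y = Γ y * (1 + ζ * μ y) := by
    intro y
    calc outDist P (VNC Γ lam ζ) y = ∑ x, Γ y * (P x * (1 + ζ * lam x y)) := by
          refine Finset.sum_congr rfl fun x _ => ?_
          simp only [VNC, outDist]; ring
      _ = Γ y * (1 + ζ * μ y) := by rw [← Finset.mul_sum, hrow y]
  have hlog : ∀ (x : X) (y : Y),
      Real.log (VNC Γ lam ζ x y / outDist P (VNC Γ lam ζ) y)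
        = Real.log (1 + ζ * lam x y) - Real.log (1 + ζ * μ y) := by
    intro x y
    rw [hout y]
    have hv : VNC Γ lam ζ x y = Γ y * (1 + ζ * lam x y) := rfl
    rw [hv, mul_div_mul_left _ _ (ne_of_gt (hΓpos y)),
      Real.log_div (ne_of_gt (hpos1 x y)) (ne_of_gt (hpos2 y))]
  have hmi : mutInfo P (VNC Γ lam ζ)
      = ∑ y, Γ y * ((∑ x, P x * ((1 + ζ * lam x y) * Real.log (1 + ζ * lam x y)))
          - (1 + ζ * μ y) * Real.log (1 + ζ * μ y)) := by
    rw [mutInfo, Finset.sum_comm]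
    refine Finset.sum_congr rfl fun y _ => ?_
    have hterm : ∀ x ∈ Finset.univ, P x * VNC Γ lam ζ x y *
        Real.log (VNC Γ lam ζ x y / outDist P (VNC Γ lam ζ) y)
        = Γ y * (P x * ((1 + ζ * lam x y) * Real.log (1 + ζ * lam x y)))
          - Γ y * ((P x * (1 + ζ * lam x y)) * Real.log (1 + ζ * μ y)) := by
      intro x _
      rw [hlog x y]
      show P x * (Γ y * (1 + ζ * lam x y)) * _ = _
      ring
    rw [Finset.sum_congr rfl hterm, Finset.sum_sub_distrib, ← Finset.mul_sum,
      ← Finset.mul_sum, ← mul_sub, ← Finset.sum_mul, hrow y]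
  have hq : ζ^2 * (1/2 * ∑ y, Γ y * ((∑ x, P x * lam x y ^ 2) - (μ y)^2))
      = ∑ y, Γ y * ((∑ x, P x * (ζ * lam x y + (ζ * lam x y)^2/2))
          - (ζ * μ y + (ζ * μ y)^2/2)) := by
    rw [show ζ^2 * (1/2 * ∑ y, Γ y * ((∑ x, P x * lam x y ^ 2) - (μ y)^2))
        = ∑ y, (ζ^2/2) * (Γ y * ((∑ x, P x * lam x y ^ 2) - (μ y)^2)) from by
      rw [← Finset.mul_sum]; ring]
    refine Finset.sum_congr rfl fun y _ => ?_
    have hsum : ∑ x, P x * (ζ * lam x y + (ζ * lam x y)^2/2)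
        = ζ * μ y + ζ^2/2 * (∑ x, P x * lam x y ^ 2) := by
      have h1 : ∀ x ∈ Finset.univ, P x * (ζ * lam x y + (ζ * lam x y)^2/2)
          = ζ * (P x * lam x y) + ζ^2/2 * (P x * lam x y ^ 2) := fun x _ => by ring
      rw [Finset.sum_congr rfl h1, Finset.sum_add_distrib, ← Finset.mul_sum,
        ← Finset.mul_sum]
    rw [hsum]; ring
  rw [hmi, hq, ← Finset.sum_sub_distrib]
  have hbound : ∀ y ∈ Finset.univ,
      |Γ y * ((∑ x, P x * ((1 + ζ * lam x y) * Real.log (1 + ζ * lam x y)))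
          - (1 + ζ * μ y) * Real.log (1 + ζ * μ y))
        - Γ y * ((∑ x, P x * (ζ * lam x y + (ζ * lam x y)^2/2))
          - (ζ * μ y + (ζ * μ y)^2/2))| ≤ Γ y * (8*Λ^3*ζ^3) := by
    intro y _
    have hsplit : (∑ x, P x * ((1 + ζ * lam x y) * Real.log (1 + ζ * lam x y)))
        - (∑ x, P x * (ζ * lam x y + (ζ * lam x y)^2/2))
        = ∑ x, P x * ((1 + ζ * lam x y) * Real.log (1 + ζ * lam x y)
            - (ζ * lam x y + (ζ * lam x y)^2/2)) := by
      rw [← Finset.sum_sub_distrib]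
      exact Finset.sum_congr rfl fun x _ => by ring
    have heq : Γ y * ((∑ x, P x * ((1 + ζ * lam x y) * Real.log (1 + ζ * lam x y)))
          - (1 + ζ * μ y) * Real.log (1 + ζ * μ y))
        - Γ y * ((∑ x, P x * (ζ * lam x y + (ζ * lam x y)^2/2))
          - (ζ * μ y + (ζ * μ y)^2/2))
        = Γ y * ((∑ x, P x * ((1 + ζ * lam x y) * Real.log (1 + ζ * lam x y)
            - (ζ * lam x y + (ζ * lam x y)^2/2)))
          - ((1 + ζ * μ y) * Real.log (1 + ζ * μ y)
            - (ζ * μ y + (ζ * μ y)^2/2))) := by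
      linear_combination (Γ y) * hsplit
    rw [heq, abs_mul, abs_of_pos (hΓpos y)]
    refine mul_le_mul_of_nonneg_left ?_ (hΓpos y).le
    have hcube : ∀ t : ℝ, |t| ≤ ζ * Λ → |t| ≤ 1/2 →
        |(1 + t) * Real.log (1 + t) - (t + t^2/2)| ≤ 4 * (Λ^3 * ζ^3) := by
      intro t h1 h2
      calc |(1 + t) * Real.log (1 + t) - (t + t^2/2)| ≤ 4 * |t|^3 := F_taylor h2
        _ ≤ 4 * (Λ^3 * ζ^3) := by
            have h3 : |t|^3 ≤ (ζ*Λ)^3 := pow_le_pow_left₀ (abs_nonneg t) h1 3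
            nlinarith
    have h1 : |∑ x, P x * ((1 + ζ * lam x y) * Real.log (1 + ζ * lam x y)
        - (ζ * lam x y + (ζ * lam x y)^2/2))| ≤ 4 * (Λ^3 * ζ^3) := by
      calc |∑ x, P x * ((1 + ζ * lam x y) * Real.log (1 + ζ * lam x y)
            - (ζ * lam x y + (ζ * lam x y)^2/2))|
          ≤ ∑ x, |P x * ((1 + ζ * lam x y) * Real.log (1 + ζ * lam x y)
            - (ζ * lam x y + (ζ * lam x y)^2/2))| := Finset.abs_sum_le_sum_abs _ _
        _ ≤ ∑ x, P x * (4 * (Λ^3 * ζ^3)) := by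
            refine Finset.sum_le_sum fun x _ => ?_
            rw [abs_mul, abs_of_nonneg (hP.1 x)]
            exact mul_le_mul_of_nonneg_left (hcube _ (hb x y) (hb2 x y)) (hP.1 x)
        _ = 4 * (Λ^3 * ζ^3) := by rw [← Finset.sum_mul, hP.2, one_mul]
    have h2 : |(1 + ζ * μ y) * Real.log (1 + ζ * μ y)
        - (ζ * μ y + (ζ * μ y)^2/2)| ≤ 4 * (Λ^3 * ζ^3) :=
      hcube _ (hbμ y) (hbμ2 y)
    calc |(∑ x, P x * ((1 + ζ * lam x y) * Real.log (1 + ζ * lam x y)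
            - (ζ * lam x y + (ζ * lam x y)^2/2)))
          - ((1 + ζ * μ y) * Real.log (1 + ζ * μ y)
            - (ζ * μ y + (ζ * μ y)^2/2))|
        ≤ |∑ x, P x * ((1 + ζ * lam x y) * Real.log (1 + ζ * lam x y)
            - (ζ * lam x y + (ζ * lam x y)^2/2))|
          + |(1 + ζ * μ y) * Real.log (1 + ζ * μ y)
            - (ζ * μ y + (ζ * μ y)^2/2)| := abs_sub _ _
      _ ≤ 4 * (Λ^3 * ζ^3) + 4 * (Λ^3 * ζ^3) := add_le_add h1 h2
      _ = 8*Λ^3*ζ^3 := by ring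
  calc |∑ y, (Γ y * ((∑ x, P x * ((1 + ζ * lam x y) * Real.log (1 + ζ * lam x y)))
          - (1 + ζ * μ y) * Real.log (1 + ζ * μ y))
        - Γ y * ((∑ x, P x * (ζ * lam x y + (ζ * lam x y)^2/2))
          - (ζ * μ y + (ζ * μ y)^2/2)))|
      ≤ ∑ y, |Γ y * ((∑ x, P x * ((1 + ζ * lam x y) * Real.log (1 + ζ * lam x y)))
          - (1 + ζ * μ y) * Real.log (1 + ζ * μ y))
        - Γ y * ((∑ x, P x * (ζ * lam x y + (ζ * lam x y)^2/2))
          - (ζ * μ y + (ζ * μ y)^2/2))| := Finset.abs_sum_le_sum_abs _ _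
    _ ≤ ∑ y, Γ y * (8*Λ^3*ζ^3) := Finset.sum_le_sum hbound
    _ = 8*Λ^3*ζ^3 := by rw [← Finset.sum_mul, hΓ.2, one_mul]

/-- Bound on the quadratic functional. -/
lemma g_bound {X Y : Type*} [Fintype X] [Fintype Y]
    (Γ : Y → ℝ) (hΓ : IsDist Γ) (lam : X → Y → ℝ) (Λ : ℝ) (hΛ0 : 0 ≤ Λ)
    (hΛ : ∀ x y, |lam x y| ≤ Λ) (P : X → ℝ) (hP : IsDist P) :
    |1/2 * ∑ y, Γ y * ((∑ x, P x * lam x y ^ 2) - (∑ x, P x * lam x y)^2)| ≤ Λ^2 := by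
  have hy : ∀ y, |(∑ x, P x * lam x y ^ 2) - (∑ x, P x * lam x y)^2| ≤ Λ^2 := by
    intro y
    have hA1 : 0 ≤ ∑ x, P x * lam x y ^ 2 :=
      Finset.sum_nonneg fun x _ => mul_nonneg (hP.1 x) (sq_nonneg _)
    have hA2 : (∑ x, P x * lam x y ^ 2) ≤ Λ^2 := by
      calc (∑ x, P x * lam x y ^ 2) ≤ ∑ x, P x * Λ^2 := by
            refine Finset.sum_le_sum fun x _ => ?_
            refine mul_le_mul_of_nonneg_left ?_ (hP.1 x)
            have := hΛ x y
            nlinarith [abs_nonneg (lam x y), sq_abs (lam x y)]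
        _ = Λ^2 := by rw [← Finset.sum_mul, hP.2, one_mul]
    have hμ : |∑ x, P x * lam x y| ≤ Λ := by
      calc |∑ x, P x * lam x y| ≤ ∑ x, |P x * lam x y| := Finset.abs_sum_le_sum_abs _ _
        _ ≤ ∑ x, P x * Λ := by
            refine Finset.sum_le_sum fun x _ => ?_
            rw [abs_mul, abs_of_nonneg (hP.1 x)]
            exact mul_le_mul_of_nonneg_left (hΛ x y) (hP.1 x)
        _ = Λ := by rw [← Finset.sum_mul, hP.2, one_mul]
    have hμ2 : (∑ x, P x * lam x y)^2 ≤ Λ^2 := by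
      have := sq_abs (∑ x, P x * lam x y)
      nlinarith [abs_nonneg (∑ x, P x * lam x y)]
    have hμ20 : 0 ≤ (∑ x, P x * lam x y)^2 := sq_nonneg _
    rw [abs_le]; constructor <;> linarith
  calc |1/2 * ∑ y, Γ y * ((∑ x, P x * lam x y ^ 2) - (∑ x, P x * lam x y)^2)|
      = 1/2 * |∑ y, Γ y * ((∑ x, P x * lam x y ^ 2) - (∑ x, P x * lam x y)^2)| := by
        rw [abs_mul]; norm_num
    _ ≤ 1/2 * ∑ y, |Γ y * ((∑ x, P x * lam x y ^ 2) - (∑ x, P x * lam x y)^2)| := by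
        have := Finset.abs_sum_le_sum_abs
          (fun y => Γ y * ((∑ x, P x * lam x y ^ 2) - (∑ x, P x * lam x y)^2))
          (Finset.univ : Finset Y)
        linarith
    _ ≤ 1/2 * ∑ y, Γ y * Λ^2 := by
        have : ∀ y ∈ Finset.univ, |Γ y * ((∑ x, P x * lam x y ^ 2)
            - (∑ x, P x * lam x y)^2)| ≤ Γ y * Λ^2 := by
          intro y _
          rw [abs_mul, abs_of_nonneg (hΓ.1 y)]
          exact mul_le_mul_of_nonneg_left (hy y) (hΓ.1 y)
        have := Finset.sum_le_sum this
        linarith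
    _ = 1/2 * Λ^2 := by rw [← Finset.sum_mul, hΓ.2, one_mul]
    _ ≤ Λ^2 := by nlinarith

/-- Lemma (Capacity scaling for very noisy channels): `|C_ζ - ζ²𝐂| ≤ K ζ³`. -/
theorem vnc_capacity_scaling
    {X Y : Type*} [Fintype X] [Fintype Y]
    (Γ : Y → ℝ) (hΓ : IsDist Γ) (hΓpos : ∀ y, 0 < Γ y)
    (lam : X → Y → ℝ) (hlam : ∀ x, ∑ y, Γ y * lam x y = 0) :
    ∃ K : ℝ, 0 < K ∧ ∃ ζ₀ : ℝ, 0 < ζ₀ ∧ ∀ ζ : ℝ, ζ ∈ Set.Ioo 0 ζ₀ →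
      |capacity (VNC Γ lam ζ) - ζ ^ 2 * bigC Γ lam| ≤ K * ζ ^ 3 := by
  by_cases hX : Nonempty X
  case neg =>
    -- Degenerate case: empty input alphabet, both quantities are `sSup ∅ = 0`.
    have hempty : IsEmpty X := not_nonempty_iff.mp hX
    have hno : ∀ P : X → ℝ, ¬ IsDist P := by
      intro P hP
      have h2 := hP.2
      rw [Finset.univ_eq_empty, Finset.sum_empty] at h2
      norm_num at h2
    refine ⟨1, one_pos, 1, one_pos, fun ζ hζ => ?_⟩
    have h1 : capacity (VNC Γ lam ζ) = 0 := by
      have hset : {c | ∃ P, IsDist P ∧ mutInfo P (VNC Γ lam ζ) = c} = (∅ : Set ℝ) := by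
        ext c
        simp only [Set.mem_setOf_eq, Set.mem_empty_iff_false, iff_false]
        rintro ⟨P, hP, -⟩
        exact hno P hP
      rw [capacity, hset, Real.sSup_empty]
    have h2 : bigC Γ lam = 0 := by
      have hset : {c | ∃ P : X → ℝ, IsDist P ∧ c = 1 / 2 * ∑ y, Γ y *
          ((∑ x, P x * lam x y ^ 2) - (∑ x, P x * lam x y) ^ 2)} = (∅ : Set ℝ) := by
        ext c
        simp only [Set.mem_setOf_eq, Set.mem_empty_iff_false, iff_false]
        rintro ⟨P, hP, -⟩
        exact hno P hP
      rw [bigC, hset, Real.sSup_empty]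
    rw [h1, h2]
    have h3 : (0:ℝ) < ζ := hζ.1
    simp only [mul_zero, sub_zero, abs_zero, one_mul]
    positivity
  case pos =>
    -- Main case.
    have hcardpos : 0 < (Fintype.card X : ℝ) := by
      have := Fintype.card_pos (α := X)
      exact_mod_cast this
    set Λ : ℝ := 1 + ∑ x, ∑ y, |lam x y| with hΛdef
    clear_value Λ
    have hsum_nonneg : 0 ≤ ∑ x : X, ∑ y : Y, |lam x y| :=
      Finset.sum_nonneg fun x _ => Finset.sum_nonneg fun y _ => abs_nonneg _
    have hΛ1 : 1 ≤ Λ := by rw [hΛdef]; linarith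
    have hΛpos : 0 < Λ := by linarith
    have hΛb : ∀ x y, |lam x y| ≤ Λ := by
      intro x y
      have h1 : |lam x y| ≤ ∑ y', |lam x y'| :=
        Finset.single_le_sum (f := fun y' => |lam x y'|)
          (fun y' _ => abs_nonneg _) (Finset.mem_univ y)
      have h2 : (∑ y', |lam x y'|) ≤ ∑ x' : X, ∑ y', |lam x' y'| :=
        Finset.single_le_sum (f := fun x' => ∑ y', |lam x' y'|)
          (fun x' _ => Finset.sum_nonneg fun y' _ => abs_nonneg _) (Finset.mem_univ x)
      rw [hΛdef]; linarith
    refine ⟨8*Λ^3, by positivity, 1/(2*Λ), by positivity, fun ζ hζmem => ?_⟩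
    obtain ⟨hζ0, hζ1⟩ := hζmem
    have hζΛ : ζ * Λ ≤ 1/2 := by
      rw [lt_div_iff₀ (by positivity)] at hζ1
      nlinarith
    -- the uniform distribution
    have hPu : IsDist (fun _ : X => (Fintype.card X : ℝ)⁻¹) := by
      constructor
      · intro x; positivity
      · rw [Finset.sum_const, Finset.card_univ, nsmul_eq_mul,
          mul_inv_cancel₀ (ne_of_gt hcardpos)]
    -- the two sets
    have est : ∀ P : X → ℝ, IsDist P → |mutInfo P (VNC Γ lam ζ) -
        ζ^2 * (1/2 * ∑ y, Γ y * ((∑ x, P x * lam x y ^ 2) - (∑ x, P x * lam x y)^2))|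
        ≤ 8*Λ^3*ζ^3 := fun P hP =>
      mutInfo_VNC_est Γ hΓ hΓpos lam Λ hΛb P hP ζ hζ0 hζΛ
    have hgb : ∀ P : X → ℝ, IsDist P →
        |1/2 * ∑ y, Γ y * ((∑ x, P x * lam x y ^ 2) - (∑ x, P x * lam x y)^2)| ≤ Λ^2 :=
      fun P hP => g_bound Γ hΓ lam Λ hΛpos.le hΛb P hP
    have hBbdd : BddAbove {c | ∃ P : X → ℝ, IsDist P ∧ c = 1 / 2 * ∑ y, Γ y *
        ((∑ x, P x * lam x y ^ 2) - (∑ x, P x * lam x y) ^ 2)} := by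
      refine ⟨Λ^2, ?_⟩
      rintro c ⟨P, hP, rfl⟩
      exact (abs_le.1 (hgb P hP)).2
    have hAbdd : BddAbove {c | ∃ P : X → ℝ, IsDist P ∧ mutInfo P (VNC Γ lam ζ) = c} := by
      refine ⟨ζ^2 * Λ^2 + 8*Λ^3*ζ^3, ?_⟩
      rintro c ⟨P, hP, rfl⟩
      have h1 := (abs_le.1 (est P hP)).2
      have h2 := (abs_le.1 (hgb P hP)).2
      have h3 := mul_le_mul_of_nonneg_left h2 (sq_nonneg ζ)
      linarith
    have hBne : Set.Nonempty {c | ∃ P : X → ℝ, IsDist P ∧ c = 1 / 2 * ∑ y, Γ y *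
        ((∑ x, P x * lam x y ^ 2) - (∑ x, P x * lam x y) ^ 2)} :=
      ⟨_, ⟨_, hPu, rfl⟩⟩
    have hAne : Set.Nonempty {c | ∃ P : X → ℝ, IsDist P ∧ mutInfo P (VNC Γ lam ζ) = c} :=
      ⟨_, ⟨_, hPu, rfl⟩⟩
    have hcap : capacity (VNC Γ lam ζ)
        = sSup {c | ∃ P : X → ℝ, IsDist P ∧ mutInfo P (VNC Γ lam ζ) = c} := rfl
    have hbig : bigC Γ lam = sSup {c | ∃ P : X → ℝ, IsDist P ∧ c = 1 / 2 * ∑ y, Γ y *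
        ((∑ x, P x * lam x y ^ 2) - (∑ x, P x * lam x y) ^ 2)} := rfl
    -- upper bound on capacity
    have hup : capacity (VNC Γ lam ζ) ≤ ζ^2 * bigC Γ lam + 8*Λ^3*ζ^3 := by
      rw [hcap]
      refine csSup_le hAne ?_
      rintro c ⟨P, hP, rfl⟩
      have h1 := (abs_le.1 (est P hP)).2
      have hmem : (1 / 2 * ∑ y, Γ y * ((∑ x, P x * lam x y ^ 2)
          - (∑ x, P x * lam x y) ^ 2)) ∈ {c | ∃ P : X → ℝ, IsDist P ∧
            c = 1 / 2 * ∑ y, Γ y * ((∑ x, P x * lam x y ^ 2)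
              - (∑ x, P x * lam x y) ^ 2)} := ⟨P, hP, rfl⟩
      have h2 := le_csSup hBbdd hmem
      rw [← hbig] at h2
      have h3 : ζ^2 * (1/2 * ∑ y, Γ y * ((∑ x, P x * lam x y ^ 2)
          - (∑ x, P x * lam x y)^2)) ≤ ζ^2 * bigC Γ lam := by
        exact mul_le_mul_of_nonneg_left h2 (sq_nonneg ζ)
      linarith
    -- lower bound on capacity
    have hlow : ζ^2 * bigC Γ lam ≤ capacity (VNC Γ lam ζ) + 8*Λ^3*ζ^3 := by
      have hdiv : bigC Γ lam ≤ (capacity (VNC Γ lam ζ) + 8*Λ^3*ζ^3) / ζ^2 := by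
        rw [hbig]
        refine csSup_le hBne ?_
        rintro c ⟨P, hP, rfl⟩
        rw [le_div_iff₀ (by positivity)]
        have h1 := (abs_le.1 (est P hP)).1
        have hmem : mutInfo P (VNC Γ lam ζ) ∈ {c | ∃ P : X → ℝ, IsDist P ∧
            mutInfo P (VNC Γ lam ζ) = c} := ⟨P, hP, rfl⟩
        have h2 := le_csSup hAbdd hmem
        rw [← hcap] at h2
        have h3 : ζ^2 * (1/2 * ∑ y, Γ y * ((∑ x, P x * lam x y ^ 2)
            - (∑ x, P x * lam x y)^2)) ≤ capacity (VNC Γ lam ζ) + 8*Λ^3*ζ^3 := by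
          linarith
        calc (1 / 2 * ∑ y, Γ y * ((∑ x, P x * lam x y ^ 2)
              - (∑ x, P x * lam x y) ^ 2)) * ζ^2
            = ζ^2 * (1/2 * ∑ y, Γ y * ((∑ x, P x * lam x y ^ 2)
              - (∑ x, P x * lam x y)^2)) := mul_comm _ _
          _ ≤ capacity (VNC Γ lam ζ) + 8*Λ^3*ζ^3 := h3
      have h4 : ζ^2 * bigC Γ lam
          ≤ ζ^2 * ((capacity (VNC Γ lam ζ) + 8*Λ^3*ζ^3) / ζ^2) :=
        mul_le_mul_of_nonneg_left hdiv (sq_nonneg ζ)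
      rwa [mul_div_cancel₀ _ (by positivity : (ζ:ℝ)^2 ≠ 0)] at h4
    rw [abs_sub_le_iff]
    constructor <;> nlinarith


end Paper
end
end

section
/- (Dispersion scaling for very noisy channels.) There exist a constant K > 0 and ζ₀ > 0, depending only on λ_max, |𝒳| and |𝒴|, such that for all ζ ∈ (0, ζ₀): |V_{min,ζ} − 2C_ζ| ≤ K·ζ³, |V_{min,ζ} − 2ζ²·𝐂| ≤ K·ζ³, |V_{max,ζ} − 2C_ζ| ≤ K·ζ³, and |V_{max,ζ} − 2ζ²·𝐂| ≤ K·ζ³. -/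
open MeasureTheory Real Filter Set
open scoped BigOperators ENNReal Classical

noncomputable section

namespace Paper

variable {X Y : Type*} [Fintype X] [Fintype Y]

/-! ### Auxiliary lemmas for the dispersion scaling theorem -/

section DispersionAux

lemma logt1 {u : ℝ} (h : |u| ≤ 1/2) : |Real.log (1+u) - u| ≤ 2*u^2 := by
  have h1 : |(-u)| < 1 := by rw [abs_neg]; linarith [abs_nonneg u]
  have h0 := Real.abs_log_sub_add_sum_range_le h1 1
  simp [Finset.sum_range_one] at h0
  have h2 : (1:ℝ)/2 ≤ 1 - |u| := by linarith
  have h3 : |Real.log (1+u) - u| = |-u + Real.log (1+u)| := by congr 1; ring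
  rw [h3]
  refine h0.trans ?_
  rw [div_le_iff₀ (by linarith [abs_nonneg u])]
  nlinarith [sq_nonneg u, abs_nonneg u]

lemma logt2 {u : ℝ} (h : |u| ≤ 1/2) : |Real.log (1+u) - (u - u^2/2)| ≤ 2*|u|^3 := by
  have h1 : |(-u)| < 1 := by rw [abs_neg]; linarith [abs_nonneg u]
  have h0 := Real.abs_log_sub_add_sum_range_le h1 2
  have hs : ∑ i ∈ Finset.range 2, (-u) ^ (i + 1) / (i + 1) = -u + u^2/2 := by
    simp [Finset.sum_range_succ]; ring
  rw [hs, abs_neg, show (1:ℝ) - -u = 1 + u by ring] at h0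
  have h2 : (1:ℝ)/2 ≤ 1 - |u| := by linarith
  have h3 : |Real.log (1+u) - (u - u^2/2)| = |-u + u^2/2 + Real.log (1+u)| := by
    congr 1; ring
  rw [h3]
  refine h0.trans ?_
  rw [div_le_iff₀ (by linarith [abs_nonneg u])]
  have he : |u| ^ (2+1) = |u|^3 := rfl
  rw [he]
  nlinarith [pow_nonneg (abs_nonneg u) 3, abs_nonneg u]

lemma key_pointwise {B ζ a b : ℝ} (ha : |a| ≤ B) (hb : |b| ≤ B)
    (hζ : 0 < ζ) (hζB : ζ * B ≤ 1/2) :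
    |(1 + ζ*a) * (Real.log (1+ζ*a) - Real.log (1+ζ*b)) - (ζ*(a-b) + ζ^2*(a-b)^2/2)|
      ≤ 7*B^3*ζ^3 := by
  have hza : |ζ*a| ≤ ζ*B := by
    rw [abs_mul, abs_of_pos hζ]; exact mul_le_mul_of_nonneg_left ha hζ.le
  have hzb : |ζ*b| ≤ ζ*B := by
    rw [abs_mul, abs_of_pos hζ]; exact mul_le_mul_of_nonneg_left hb hζ.le
  have hza2 : |ζ*a| ≤ 1/2 := hza.trans hζB
  have hzb2 : |ζ*b| ≤ 1/2 := hzb.trans hζB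
  set Ea := Real.log (1+ζ*a) - (ζ*a - (ζ*a)^2/2) with hEa
  set Eb := Real.log (1+ζ*b) - (ζ*b - (ζ*b)^2/2) with hEb
  have hEa' : |Ea| ≤ 2*(ζ*B)^3 := by
    refine (logt2 hza2).trans ?_
    have := pow_le_pow_left₀ (abs_nonneg (ζ*a)) hza 3
    linarith
  have hEb' : |Eb| ≤ 2*(ζ*B)^3 := by
    refine (logt2 hzb2).trans ?_
    have := pow_le_pow_left₀ (abs_nonneg (ζ*b)) hzb 3
    linarith
  have hid : (1 + ζ*a) * (Real.log (1+ζ*a) - Real.log (1+ζ*b)) - (ζ*(a-b) + ζ^2*(a-b)^2/2)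
      = -(ζ^3*a*(a^2-b^2)/2) + (1+ζ*a)*(Ea - Eb) := by
    rw [hEa, hEb]; ring
  rw [hid]
  have h1 : |(-(ζ^3*a*(a^2-b^2)/2))| ≤ ζ^3 * B^3 := by
    rw [abs_neg, abs_div, abs_of_pos (by norm_num : (0:ℝ) < 2)]
    rw [div_le_iff₀ (by norm_num : (0:ℝ) < 2)]
    have he : |ζ^3*a*(a^2-b^2)| = ζ^3 * (|a| * |a^2 - b^2|) := by
      rw [abs_mul, abs_mul, abs_pow, abs_of_pos hζ]; ring
    rw [he]
    have habs : |a^2 - b^2| ≤ 2*B^2 := by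
      have h2 : |a^2| ≤ B^2 := by rw [abs_pow]; exact pow_le_pow_left₀ (abs_nonneg a) ha 2
      have h3 : |b^2| ≤ B^2 := by rw [abs_pow]; exact pow_le_pow_left₀ (abs_nonneg b) hb 2
      calc |a^2 - b^2| ≤ |a^2| + |b^2| := abs_sub _ _
        _ ≤ 2*B^2 := by linarith
    have hz3 : (0:ℝ) < ζ^3 := by positivity
    have hprod : |a| * |a^2 - b^2| ≤ B * (2*B^2) :=
      mul_le_mul ha habs (abs_nonneg _) ((abs_nonneg a).trans ha)
    nlinarith [mul_le_mul_of_nonneg_left hprod hz3.le]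
  have h2 : |(1+ζ*a)*(Ea-Eb)| ≤ (3/2) * (4*(ζ*B)^3) := by
    rw [abs_mul]
    have hb1 : |1+ζ*a| ≤ 3/2 := by
      have := abs_le.1 hza2
      rw [abs_le]; constructor <;> linarith
    have hb2 : |Ea - Eb| ≤ 4*(ζ*B)^3 := by
      calc |Ea - Eb| ≤ |Ea| + |Eb| := abs_sub _ _
        _ ≤ 4*(ζ*B)^3 := by linarith
    have := mul_le_mul hb1 hb2 (abs_nonneg _) (by norm_num)
    linarith
  calc |(-(ζ^3*a*(a^2-b^2)/2)) + (1+ζ*a)*(Ea-Eb)|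
      ≤ |(-(ζ^3*a*(a^2-b^2)/2))| + |(1+ζ*a)*(Ea-Eb)| := abs_add_le _ _
    _ ≤ ζ^3*B^3 + (3/2)*(4*(ζ*B)^3) := by linarith
    _ = 7*B^3*ζ^3 := by ring

lemma weighted_abs_le {ι : Type*} [Fintype ι] (w f : ι → ℝ) (hw : ∀ i, 0 ≤ w i)
    (hw1 : ∑ i, w i = 1) {c : ℝ} (hf : ∀ i, |f i| ≤ c) : |∑ i, w i * f i| ≤ c := by
  calc |∑ i, w i * f i| ≤ ∑ i, |w i * f i| := Finset.abs_sum_le_sum_abs _ _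
    _ = ∑ i, w i * |f i| := by
        refine Finset.sum_congr rfl fun i _ => ?_
        rw [abs_mul, abs_of_nonneg (hw i)]
    _ ≤ ∑ i, w i * c := Finset.sum_le_sum fun i _ =>
        mul_le_mul_of_nonneg_left (hf i) (hw i)
    _ = c := by rw [← Finset.sum_mul, hw1, one_mul]

/-- induced output direction -/
def tP (lam : X → Y → ℝ) (P : X → ℝ) (y : Y) : ℝ := ∑ x, P x * lam x y

/-- the quadratic functional whose sup is `bigC` -/
def Ff (Γ : Y → ℝ) (lam : X → Y → ℝ) (P : X → ℝ) : ℝ :=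
  1 / 2 * ∑ y, Γ y * ((∑ x, P x * lam x y ^ 2) - (∑ x, P x * lam x y) ^ 2)

section MainAux
variable {Γ : Y → ℝ} {lam : X → Y → ℝ} {B ζ : ℝ} {P : X → ℝ}

lemma tP_abs_le (hP : IsDist P) (hB : ∀ x y, |lam x y| ≤ B) (y : Y) :
    |tP lam P y| ≤ B :=
  weighted_abs_le P (fun x => lam x y) hP.1 hP.2 (fun x => hB x y)

lemma tP_gamma (hP : IsDist P) (hlam : ∀ x, ∑ y, Γ y * lam x y = 0) :
    ∑ y, Γ y * tP lam P y = 0 := by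
  unfold tP
  calc ∑ y, Γ y * ∑ x, P x * lam x y
      = ∑ y, ∑ x, P x * (Γ y * lam x y) := by
        refine Finset.sum_congr rfl fun y _ => ?_
        rw [Finset.mul_sum]; exact Finset.sum_congr rfl fun x _ => by ring
    _ = ∑ x, ∑ y, P x * (Γ y * lam x y) := Finset.sum_comm
    _ = ∑ x, P x * ∑ y, Γ y * lam x y := by
        exact Finset.sum_congr rfl fun x _ => (Finset.mul_sum _ _ _).symm
    _ = 0 := by simp [hlam]

lemma outDist_vnc (hP : IsDist P) (y : Y) :
    outDist P (VNC Γ lam ζ) y = Γ y * (1 + ζ * tP lam P y) := by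
  unfold outDist VNC tP
  have h1 : ∀ x ∈ Finset.univ, P x * (Γ y * (1 + ζ * lam x y))
      = Γ y * P x + (Γ y * ζ) * (P x * lam x y) := fun x _ => by ring
  rw [Finset.sum_congr rfl h1, Finset.sum_add_distrib, ← Finset.mul_sum, ← Finset.mul_sum, hP.2]
  ring

lemma one_add_bounds {a : ℝ} (hζ : 0 < ζ) (hζB : ζ * B ≤ 1/2) (ha : |a| ≤ B) :
    1/2 ≤ 1 + ζ*a ∧ 1 + ζ*a ≤ 3/2 := by
  have h1 : |ζ*a| ≤ ζ*B := by
    rw [abs_mul, abs_of_pos hζ]; exact mul_le_mul_of_nonneg_left ha hζ.le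
  have h2 := abs_le.1 (h1.trans hζB)
  constructor <;> linarith [h2.1, h2.2]

lemma inner_lin (hP : IsDist P) (f : X → ℝ) :
    ∑ x, P x * (f x - ∑ x', P x' * f x') = 0 := by
  have h1 : ∀ x ∈ Finset.univ, P x * (f x - ∑ x', P x' * f x')
      = P x * f x - (∑ x', P x' * f x') * P x := fun x _ => by ring
  rw [Finset.sum_congr rfl h1, Finset.sum_sub_distrib, ← Finset.mul_sum, hP.2]
  ring

lemma inner_sq (hP : IsDist P) (f : X → ℝ) :
    ∑ x, P x * (f x - ∑ x', P x' * f x')^2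
      = (∑ x, P x * f x ^ 2) - (∑ x, P x * f x)^2 := by
  set c := ∑ x', P x' * f x' with hc
  have h1 : ∀ x ∈ Finset.univ, P x * (f x - c)^2
      = P x * f x^2 - (2*c) * (P x * f x) + c^2 * P x := fun x _ => by ring
  rw [Finset.sum_congr rfl h1]
  rw [Finset.sum_add_distrib, Finset.sum_sub_distrib, ← Finset.mul_sum, ← Finset.mul_sum,
    ← hc, hP.2]
  ring

lemma main_sum_id (hP : IsDist P) :
    ∑ x, ∑ y, P x * Γ y * (ζ*(lam x y - tP lam P y) + ζ^2*(lam x y - tP lam P y)^2/2)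
      = ζ^2 * Ff Γ lam P := by
  rw [Finset.sum_comm]
  have hy : ∀ y, ∑ x, P x * Γ y * (ζ*(lam x y - tP lam P y) + ζ^2*(lam x y - tP lam P y)^2/2)
      = (Γ y * ζ^2/2) * ((∑ x, P x * lam x y ^ 2) - (tP lam P y)^2) := by
    intro y
    have h1 : ∀ x ∈ Finset.univ,
        P x * Γ y * (ζ*(lam x y - tP lam P y) + ζ^2*(lam x y - tP lam P y)^2/2)
        = (Γ y * ζ) * (P x * (lam x y - tP lam P y))
          + (Γ y * ζ^2/2) * (P x * (lam x y - tP lam P y)^2) :=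
      fun x _ => by ring
    rw [Finset.sum_congr rfl h1, Finset.sum_add_distrib, ← Finset.mul_sum, ← Finset.mul_sum]
    have e1 := inner_lin hP (fun x => lam x y)
    have e2 := inner_sq hP (fun x => lam x y)
    simp only [] at e1 e2
    have ht : tP lam P y = ∑ x', P x' * lam x' y := rfl
    rw [ht, e1, e2]
    ring
  rw [Finset.sum_congr rfl (fun y _ => hy y)]
  unfold Ff
  rw [Finset.mul_sum, Finset.mul_sum]
  exact Finset.sum_congr rfl fun y _ => by unfold tP; ring

lemma mutInfo_vnc (hΓpos : ∀ y, 0 < Γ y) (hζ : 0 < ζ) (hζB : ζ * B ≤ 1/2)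
    (hB : ∀ x y, |lam x y| ≤ B) (hP : IsDist P) :
    mutInfo P (VNC Γ lam ζ)
      = ∑ x, ∑ y, P x * Γ y *
          ((1 + ζ*lam x y) * (Real.log (1+ζ*lam x y) - Real.log (1+ζ*tP lam P y))) := by
  unfold mutInfo
  refine Finset.sum_congr rfl fun x _ => Finset.sum_congr rfl fun y _ => ?_
  rw [outDist_vnc hP y]
  have hΓy := hΓpos y
  have ha := (one_add_bounds hζ hζB (hB x y)).1
  have hb := (one_add_bounds hζ hζB (tP_abs_le hP hB y)).1
  have hW : VNC Γ lam ζ x y = Γ y * (1+ζ*lam x y) := rfl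
  rw [hW, mul_div_mul_left _ _ (ne_of_gt hΓy),
    Real.log_div (by linarith) (by linarith)]
  ring

lemma double_est {G M : X → Y → ℝ} (hP : IsDist P) (hΓ : IsDist Γ) {c : ℝ}
    (h : ∀ x y, |G x y - M x y| ≤ c) :
    |(∑ x, ∑ y, P x * Γ y * G x y) - ∑ x, ∑ y, P x * Γ y * M x y| ≤ c := by
  have e : (∑ x, ∑ y, P x * Γ y * G x y) - ∑ x, ∑ y, P x * Γ y * M x y
      = ∑ x, P x * ∑ y, Γ y * (G x y - M x y) := by
    rw [← Finset.sum_sub_distrib]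
    refine Finset.sum_congr rfl fun x _ => ?_
    rw [← Finset.sum_sub_distrib, Finset.mul_sum]
    exact Finset.sum_congr rfl fun y _ => by ring
  rw [e]
  exact weighted_abs_le P _ hP.1 hP.2 fun x =>
    weighted_abs_le Γ _ hΓ.1 hΓ.2 fun y => h x y

lemma mutInfo_est (hΓ : IsDist Γ) (hΓpos : ∀ y, 0 < Γ y)
    (hB : ∀ x y, |lam x y| ≤ B) (hζ : 0 < ζ) (hζB : ζ * B ≤ 1/2) (hP : IsDist P) :
    |mutInfo P (VNC Γ lam ζ) - ζ^2 * Ff Γ lam P| ≤ 7*B^3*ζ^3 := by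
  rw [mutInfo_vnc hΓpos hζ hζB hB hP, ← main_sum_id hP]
  exact double_est hP hΓ fun x y =>
    key_pointwise (hB x y) (tP_abs_le hP hB y) hζ hζB

lemma Ff_abs_le (hΓ : IsDist Γ) (hB : ∀ x y, |lam x y| ≤ B) (hP : IsDist P) :
    |Ff Γ lam P| ≤ B^2 := by
  unfold Ff
  rw [abs_mul, abs_of_pos (by norm_num : (0:ℝ) < 1/2)]
  have h : |∑ y, Γ y * ((∑ x, P x * lam x y ^ 2) - (∑ x, P x * lam x y) ^ 2)| ≤ 2*B^2 := by
    refine weighted_abs_le Γ _ hΓ.1 hΓ.2 fun y => ?_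
    have h1 : |∑ x, P x * lam x y ^ 2| ≤ B^2 := by
      refine weighted_abs_le P _ hP.1 hP.2 fun x => ?_
      rw [abs_pow]
      exact pow_le_pow_left₀ (abs_nonneg _) (hB x y) 2
    have h2 : |(∑ x, P x * lam x y)^2| ≤ B^2 := by
      rw [abs_pow]
      exact pow_le_pow_left₀ (abs_nonneg _) (tP_abs_le hP hB y) 2
    calc |(∑ x, P x * lam x y ^ 2) - (∑ x, P x * lam x y) ^ 2|
        ≤ |∑ x, P x * lam x y ^ 2| + |(∑ x, P x * lam x y) ^ 2| := abs_sub _ _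
      _ ≤ 2*B^2 := by linarith
  linarith

lemma outDist_pos {W : X → Y → ℝ} (hW : ∀ x y, 0 < W x y) (hP : IsDist P) (y : Y) :
    0 < outDist P W y := by
  obtain ⟨x0, hx0⟩ : ∃ x, 0 < P x := by
    by_contra hc
    push_neg at hc
    have h := Finset.sum_nonpos (fun x (_ : x ∈ Finset.univ) => hc x)
    rw [hP.2] at h; linarith
  exact Finset.sum_pos' (fun x _ => mul_nonneg (hP.1 x) (hW x y).le)
    ⟨x0, Finset.mem_univ x0, mul_pos hx0 (hW x0 y)⟩

lemma mutInfo_contOn {W : X → Y → ℝ} (hW : ∀ x y, 0 < W x y) :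
    ContinuousOn (fun P => mutInfo P W) {P : X → ℝ | IsDist P} := by
  unfold mutInfo
  refine continuousOn_finset_sum _ fun x _ => continuousOn_finset_sum _ fun y _ => ?_
  refine ContinuousOn.mul ?_ ?_
  · exact ((continuous_apply x).mul continuous_const).continuousOn
  · refine ContinuousOn.log ?_ ?_
    · refine ContinuousOn.div continuousOn_const ?_ ?_
      · exact (continuous_finset_sum _ fun x' (_ : x' ∈ Finset.univ) =>
          (continuous_apply x').mul continuous_const).continuousOn
      · exact fun P hP => (outDist_pos hW hP y).ne'
    · exact fun P hP => (div_pos (hW x y) (outDist_pos hW hP y)).ne'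

lemma unif_isDist [Nonempty X] : IsDist (fun _ : X => (Fintype.card X : ℝ)⁻¹) := by
  constructor
  · intro x; positivity
  · rw [Finset.sum_const, Finset.card_univ, nsmul_eq_mul, mul_inv_cancel₀]
    exact Nat.cast_ne_zero.2 Fintype.card_ne_zero

lemma exists_achiever [Nonempty X] {W : X → Y → ℝ} (hW : ∀ x y, 0 < W x y) :
    (capacityAchievers W).Nonempty := by
  have hS : IsCompact {P : X → ℝ | IsDist P} := by
    have he : {P : X → ℝ | IsDist P} = stdSimplex ℝ X := rfl
    rw [he]; exact isCompact_stdSimplex ℝ X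
  have hne : Set.Nonempty {P : X → ℝ | IsDist P} :=
    ⟨fun _ => (Fintype.card X : ℝ)⁻¹, unif_isDist⟩
  obtain ⟨Pm, hPm, hmax⟩ := hS.exists_isMaxOn hne (mutInfo_contOn hW)
  refine ⟨Pm, hPm, ?_⟩
  have hgr : IsGreatest {c | ∃ P, IsDist P ∧ mutInfo P W = c} (mutInfo Pm W) := by
    constructor
    · exact ⟨Pm, hPm, rfl⟩
    · rintro c ⟨P, hP, rfl⟩
      exact isMaxOn_iff.1 hmax P hP
  exact hgr.csSup_eq.symm

lemma mid_isDist {Q : X → ℝ} (hP : IsDist P) (hQ : IsDist Q) :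
    IsDist (fun x => (P x + Q x)/2) := by
  constructor
  · intro x
    have := hP.1 x; have := hQ.1 x; positivity
  · rw [← Finset.sum_div, Finset.sum_add_distrib, hP.2, hQ.2]; norm_num

lemma tP_mid {Q : X → ℝ} (y : Y) :
    tP lam (fun x => (P x + Q x)/2) y = (tP lam P y + tP lam Q y)/2 := by
  unfold tP
  rw [← Finset.sum_add_distrib, Finset.sum_div]
  exact Finset.sum_congr rfl fun x _ => by ring

lemma Ff_mid_id {Q : X → ℝ} :
    Ff Γ lam (fun x => (P x + Q x)/2) - (Ff Γ lam P + Ff Γ lam Q)/2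
      = 1/8 * ∑ y, Γ y * (tP lam P y - tP lam Q y)^2 := by
  unfold Ff
  have hsq : ∀ y, ∑ x, ((P x + Q x)/2) * lam x y ^ 2
      = ((∑ x, P x * lam x y^2) + ∑ x, Q x * lam x y^2)/2 := by
    intro y
    rw [← Finset.sum_add_distrib, Finset.sum_div]
    exact Finset.sum_congr rfl fun x _ => by ring
  have hlin : ∀ y, ∑ x, ((P x + Q x)/2) * lam x y
      = ((∑ x, P x * lam x y) + ∑ x, Q x * lam x y)/2 := by
    intro y
    rw [← Finset.sum_add_distrib, Finset.sum_div]
    exact Finset.sum_congr rfl fun x _ => by ring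
  rw [Finset.sum_congr rfl (fun y (_ : y ∈ Finset.univ) => by rw [hsq y, hlin y])]
  rw [Finset.mul_sum, Finset.mul_sum, Finset.mul_sum, Finset.mul_sum,
    ← Finset.sum_add_distrib, Finset.sum_div, ← Finset.sum_sub_distrib]
  refine Finset.sum_congr rfl fun y _ => ?_
  unfold tP
  ring

lemma pg_id (hP : IsDist P) (s : Y → ℝ) :
    (∑ x, P x * ∑ y, Γ y * (lam x y - s y)^2) - 2 * Ff Γ lam P
      = ∑ y, Γ y * (tP lam P y - s y)^2 := by
  have h1 : ∑ x, P x * ∑ y, Γ y * (lam x y - s y)^2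
      = ∑ y, Γ y * ((∑ x, P x * lam x y ^ 2) - 2 * s y * tP lam P y + s y^2) := by
    calc ∑ x, P x * ∑ y, Γ y * (lam x y - s y)^2
        = ∑ x, ∑ y, Γ y * (P x * lam x y^2 - (2 * s y) * (P x * lam x y) + s y^2 * P x) := by
          refine Finset.sum_congr rfl fun x _ => ?_
          rw [Finset.mul_sum]
          exact Finset.sum_congr rfl fun y _ => by ring
      _ = ∑ y, ∑ x, Γ y * (P x * lam x y^2 - (2 * s y) * (P x * lam x y) + s y^2 * P x) :=
          Finset.sum_comm
      _ = ∑ y, Γ y * ((∑ x, P x * lam x y ^ 2) - 2 * s y * tP lam P y + s y^2) := by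
          refine Finset.sum_congr rfl fun y _ => ?_
          rw [← Finset.mul_sum, Finset.sum_add_distrib, Finset.sum_sub_distrib,
            ← Finset.mul_sum, ← Finset.mul_sum, hP.2]
          unfold tP; ring
  rw [h1]
  unfold Ff
  rw [Finset.mul_sum, Finset.mul_sum, ← Finset.sum_sub_distrib]
  refine Finset.sum_congr rfl fun y _ => ?_
  unfold tP; ring

lemma single_est {U V : Y → ℝ} (hΓ : IsDist Γ) {c : ℝ} (h : ∀ y, |U y - V y| ≤ c) :
    |(∑ y, Γ y * U y) - ∑ y, Γ y * V y| ≤ c := by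
  have e : (∑ y, Γ y * U y) - ∑ y, Γ y * V y = ∑ y, Γ y * (U y - V y) := by
    rw [← Finset.sum_sub_distrib]; exact Finset.sum_congr rfl fun y _ => by ring
  rw [e]; exact weighted_abs_le Γ _ hΓ.1 hΓ.2 h

lemma bddAbove_capSet (hΓ : IsDist Γ) (hΓpos : ∀ y, 0 < Γ y)
    (hB : ∀ x y, |lam x y| ≤ B) (hζ : 0 < ζ) (hζB : ζ * B ≤ 1/2) :
    BddAbove {c | ∃ P : X → ℝ, IsDist P ∧ mutInfo P (VNC Γ lam ζ) = c} := by
  refine ⟨ζ^2*B^2 + 7*B^3*ζ^3, ?_⟩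
  rintro c ⟨P, hP, rfl⟩
  have h1 := (abs_le.1 (mutInfo_est hΓ hΓpos hB hζ hζB hP)).2
  have h2 := (abs_le.1 (Ff_abs_le hΓ hB hP)).2
  nlinarith [mul_le_mul_of_nonneg_left h2 (sq_nonneg ζ)]

lemma bddAbove_FfSet (hΓ : IsDist Γ) (hB : ∀ x y, |lam x y| ≤ B) :
    BddAbove {c | ∃ P : X → ℝ, IsDist P ∧ c = Ff Γ lam P} := by
  refine ⟨B^2, ?_⟩
  rintro c ⟨P, hP, rfl⟩
  exact (abs_le.1 (Ff_abs_le hΓ hB hP)).2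

lemma le_bigC (hΓ : IsDist Γ) (hB : ∀ x y, |lam x y| ≤ B) (hP : IsDist P) :
    Ff Γ lam P ≤ bigC Γ lam :=
  le_csSup (bddAbove_FfSet hΓ hB) ⟨P, hP, rfl⟩

lemma le_cap (hΓ : IsDist Γ) (hΓpos : ∀ y, 0 < Γ y)
    (hB : ∀ x y, |lam x y| ≤ B) (hζ : 0 < ζ) (hζB : ζ * B ≤ 1/2) (hP : IsDist P) :
    mutInfo P (VNC Γ lam ζ) ≤ capacity (VNC Γ lam ζ) :=
  le_csSup (bddAbove_capSet hΓ hΓpos hB hζ hζB) ⟨P, hP, rfl⟩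

lemma cap_est [Nonempty X] (hΓ : IsDist Γ) (hΓpos : ∀ y, 0 < Γ y)
    (hB : ∀ x y, |lam x y| ≤ B) (hζ : 0 < ζ) (hζB : ζ * B ≤ 1/2) :
    |capacity (VNC Γ lam ζ) - ζ^2 * bigC Γ lam| ≤ 7*B^3*ζ^3 := by
  have hne : Set.Nonempty {c | ∃ P : X → ℝ, IsDist P ∧ mutInfo P (VNC Γ lam ζ) = c} :=
    ⟨_, ⟨_, unif_isDist, rfl⟩⟩
  have hneF : Set.Nonempty {c | ∃ P : X → ℝ, IsDist P ∧ c = Ff Γ lam P} :=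
    ⟨_, ⟨_, unif_isDist, rfl⟩⟩
  have hub : capacity (VNC Γ lam ζ) ≤ ζ^2 * bigC Γ lam + 7*B^3*ζ^3 := by
    refine csSup_le hne ?_
    rintro c ⟨P, hP, rfl⟩
    have h1 := (abs_le.1 (mutInfo_est hΓ hΓpos hB hζ hζB hP)).2
    have h2 := le_bigC hΓ hB hP
    nlinarith [mul_le_mul_of_nonneg_left h2 (sq_nonneg ζ)]
  have hlb : ζ^2 * bigC Γ lam ≤ capacity (VNC Γ lam ζ) + 7*B^3*ζ^3 := by
    have hb : bigC Γ lam ≤ (capacity (VNC Γ lam ζ) + 7*B^3*ζ^3)/ζ^2 := by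
      refine csSup_le hneF ?_
      rintro c ⟨P, hP, rfl⟩
      rw [le_div_iff₀ (by positivity : (0:ℝ) < ζ^2)]
      show Ff Γ lam P * ζ^2 ≤ capacity (VNC Γ lam ζ) + 7*B^3*ζ^3
      have h1 := (abs_le.1 (mutInfo_est hΓ hΓpos hB hζ hζB hP)).1
      have h2 := le_cap hΓ hΓpos hB hζ hζB hP
      nlinarith
    calc ζ^2 * bigC Γ lam ≤ ζ^2 * ((capacity (VNC Γ lam ζ) + 7*B^3*ζ^3)/ζ^2) :=
          mul_le_mul_of_nonneg_left hb (sq_nonneg ζ)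
      _ = capacity (VNC Γ lam ζ) + 7*B^3*ζ^3 := by field_simp
  rw [abs_le]; exact ⟨by linarith, by linarith⟩

lemma L_close {a b : ℝ} (ha : |a| ≤ B) (hb : |b| ≤ B) (hζ : 0 < ζ) (hζB : ζ*B ≤ 1/2) :
    |Real.log (1+ζ*a) - Real.log (1+ζ*b) - ζ*(a-b)| ≤ 4*B^2*ζ^2 := by
  have haa : |ζ*a| ≤ ζ*B := by
    rw [abs_mul, abs_of_pos hζ]; exact mul_le_mul_of_nonneg_left ha hζ.le
  have hbb : |ζ*b| ≤ ζ*B := by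
    rw [abs_mul, abs_of_pos hζ]; exact mul_le_mul_of_nonneg_left hb hζ.le
  have e1 := logt1 (haa.trans hζB)
  have e2 := logt1 (hbb.trans hζB)
  have q1 : (ζ*a)^2 ≤ ζ^2*B^2 := by
    have h := pow_le_pow_left₀ (abs_nonneg _) haa 2
    rw [sq_abs] at h; nlinarith
  have q2 : (ζ*b)^2 ≤ ζ^2*B^2 := by
    have h := pow_le_pow_left₀ (abs_nonneg _) hbb 2
    rw [sq_abs] at h; nlinarith
  have e3 : |Real.log (1+ζ*a) - Real.log (1+ζ*b) - ζ*(a-b)|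
      = |(Real.log (1+ζ*a) - ζ*a) - (Real.log (1+ζ*b) - ζ*b)| := by congr 1; ring
  rw [e3]
  calc |(Real.log (1+ζ*a) - ζ*a) - (Real.log (1+ζ*b) - ζ*b)|
      ≤ |Real.log (1+ζ*a) - ζ*a| + |Real.log (1+ζ*b) - ζ*b| := abs_sub _ _
    _ ≤ 4*B^2*ζ^2 := by linarith

lemma L_small {a b : ℝ} (hB1 : 1 ≤ B) (ha : |a| ≤ B) (hb : |b| ≤ B)
    (hζ : 0 < ζ) (hζB : ζ*B ≤ 1/2) :
    |Real.log (1+ζ*a) - Real.log (1+ζ*b)| ≤ 4*B*ζ := by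
  have h1 := L_close ha hb hζ hζB
  have h2 : |ζ*(a-b)| ≤ 2*B*ζ := by
    rw [abs_mul, abs_of_pos hζ]
    have : |a-b| ≤ 2*B := by
      calc |a-b| ≤ |a| + |b| := abs_sub _ _
        _ ≤ 2*B := by linarith
    nlinarith
  have hBpos : (0:ℝ) < B := lt_of_lt_of_le one_pos hB1
  have h3 : 4*B^2*ζ^2 ≤ 2*B*ζ := by nlinarith [mul_pos hζ hBpos, hζB]
  calc |Real.log (1+ζ*a) - Real.log (1+ζ*b)|
      = |(Real.log (1+ζ*a) - Real.log (1+ζ*b) - ζ*(a-b)) + ζ*(a-b)| := by congr 1; ring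
    _ ≤ |Real.log (1+ζ*a) - Real.log (1+ζ*b) - ζ*(a-b)| + |ζ*(a-b)| := abs_add_le _ _
    _ ≤ 4*B*ζ := by linarith

lemma nu_pointwise1 {a b : ℝ} (hB1 : 1 ≤ B) (ha : |a| ≤ B) (hb : |b| ≤ B)
    (hζ : 0 < ζ) (hζB : ζ*B ≤ 1/2) :
    |(1+ζ*a) * (Real.log (1+ζ*a) - Real.log (1+ζ*b)) - ζ*(a-b)| ≤ 8*B^2*ζ^2 := by
  set L := Real.log (1+ζ*a) - Real.log (1+ζ*b) with hLdef
  have h1 := L_close ha hb hζ hζB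
  have h2 := L_small hB1 ha hb hζ hζB
  have e : (1+ζ*a) * L - ζ*(a-b) = (L - ζ*(a-b)) + (ζ*a) * L := by ring
  rw [e]
  have h3 : |(ζ*a) * L| ≤ (ζ*B) * (4*B*ζ) := by
    rw [abs_mul]
    refine mul_le_mul ?_ h2 (abs_nonneg _) (by positivity)
    rw [abs_mul, abs_of_pos hζ]; exact mul_le_mul_of_nonneg_left ha hζ.le
  calc |(L - ζ*(a-b)) + (ζ*a) * L| ≤ |L - ζ*(a-b)| + |(ζ*a) * L| := abs_add_le _ _
    _ ≤ 8*B^2*ζ^2 := by nlinarith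

lemma nu_pointwise2 {a b : ℝ} (hB1 : 1 ≤ B) (ha : |a| ≤ B) (hb : |b| ≤ B)
    (hζ : 0 < ζ) (hζB : ζ*B ≤ 1/2) :
    |(1+ζ*a) * (Real.log (1+ζ*a) - Real.log (1+ζ*b))^2 - ζ^2*(a-b)^2| ≤ 40*B^3*ζ^3 := by
  set L := Real.log (1+ζ*a) - Real.log (1+ζ*b) with hLdef
  have h1 := L_close ha hb hζ hζB
  have h2 := L_small hB1 ha hb hζ hζB
  have hd : |a - b| ≤ 2*B := by
    calc |a-b| ≤ |a| + |b| := abs_sub _ _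
      _ ≤ 2*B := by linarith
  have e : (1+ζ*a) * L^2 - ζ^2*(a-b)^2
      = (L - ζ*(a-b)) * (L + ζ*(a-b)) + (ζ*a) * L^2 := by ring
  rw [e]
  have h3 : |L + ζ*(a-b)| ≤ 6*B*ζ := by
    have h4 : |ζ*(a-b)| ≤ 2*B*ζ := by
      rw [abs_mul, abs_of_pos hζ]; nlinarith
    calc |L + ζ*(a-b)| ≤ |L| + |ζ*(a-b)| := abs_add_le _ _
      _ ≤ 6*B*ζ := by linarith
  have h5 : |(L - ζ*(a-b)) * (L + ζ*(a-b))| ≤ (4*B^2*ζ^2) * (6*B*ζ) := by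
    rw [abs_mul]
    exact mul_le_mul h1 h3 (abs_nonneg _) (by positivity)
  have h6 : |(ζ*a) * L^2| ≤ (ζ*B) * (4*B*ζ)^2 := by
    rw [abs_mul]
    refine mul_le_mul ?_ ?_ (abs_nonneg _) (by positivity)
    · rw [abs_mul, abs_of_pos hζ]; exact mul_le_mul_of_nonneg_left ha hζ.le
    · rw [abs_pow]; exact pow_le_pow_left₀ (abs_nonneg _) h2 2
  calc |(L - ζ*(a-b)) * (L + ζ*(a-b)) + (ζ*a) * L^2|
      ≤ |(L - ζ*(a-b)) * (L + ζ*(a-b))| + |(ζ*a) * L^2| := abs_add_le _ _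
    _ ≤ 40*B^3*ζ^3 := by nlinarith

lemma nu_est {P₀ : X → ℝ} (hΓ : IsDist Γ) (hΓpos : ∀ y, 0 < Γ y)
    (hlam : ∀ x, ∑ y, Γ y * lam x y = 0) (hB1 : 1 ≤ B) (hB : ∀ x y, |lam x y| ≤ B)
    (hζ : 0 < ζ) (hζB : ζ * B ≤ 1/2) (hP₀ : IsDist P₀)
    (hq : qStar (VNC Γ lam ζ) = outDist P₀ (VNC Γ lam ζ)) (x : X) :
    |nu (VNC Γ lam ζ) x - ζ^2 * ∑ y, Γ y * (lam x y - tP lam P₀ y)^2| ≤ 104*B^4*ζ^3 := by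
  have hsb : ∀ y, |tP lam P₀ y| ≤ B := tP_abs_le hP₀ hB
  have hiStar : ∀ y, iStar (VNC Γ lam ζ) x y
      = Real.log (1+ζ*lam x y) - Real.log (1+ζ*tP lam P₀ y) := by
    intro y
    unfold iStar
    rw [hq, outDist_vnc hP₀ y]
    have ha := (one_add_bounds hζ hζB (hB x y)).1
    have hb := (one_add_bounds hζ hζB (hsb y)).1
    have hWe : VNC Γ lam ζ x y = Γ y * (1+ζ*lam x y) := rfl
    rw [hWe, mul_div_mul_left _ _ (ne_of_gt (hΓpos y)),
      Real.log_div (by linarith) (by linarith)]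
  have hA2 : ∑ y, VNC Γ lam ζ x y * (iStar (VNC Γ lam ζ) x y)^2
      = ∑ y, Γ y * ((1+ζ*lam x y) *
          (Real.log (1+ζ*lam x y) - Real.log (1+ζ*tP lam P₀ y))^2) := by
    refine Finset.sum_congr rfl fun y _ => ?_
    rw [hiStar y]
    have hWe : VNC Γ lam ζ x y = Γ y * (1+ζ*lam x y) := rfl
    rw [hWe]; ring
  have hA1 : ∑ y, VNC Γ lam ζ x y * iStar (VNC Γ lam ζ) x y
      = ∑ y, Γ y * ((1+ζ*lam x y) *
          (Real.log (1+ζ*lam x y) - Real.log (1+ζ*tP lam P₀ y))) := by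
    refine Finset.sum_congr rfl fun y _ => ?_
    rw [hiStar y]
    have hWe : VNC Γ lam ζ x y = Γ y * (1+ζ*lam x y) := rfl
    rw [hWe]; ring
  unfold nu
  rw [hA2, hA1]
  have e2 : |(∑ y, Γ y * ((1+ζ*lam x y) *
        (Real.log (1+ζ*lam x y) - Real.log (1+ζ*tP lam P₀ y))^2))
      - ζ^2 * ∑ y, Γ y * (lam x y - tP lam P₀ y)^2| ≤ 40*B^3*ζ^3 := by
    have hrw : ζ^2 * ∑ y, Γ y * (lam x y - tP lam P₀ y)^2
        = ∑ y, Γ y * (ζ^2*(lam x y - tP lam P₀ y)^2) := by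
      rw [Finset.mul_sum]; exact Finset.sum_congr rfl fun y _ => by ring
    rw [hrw]
    exact single_est hΓ fun y => nu_pointwise2 hB1 (hB x y) (hsb y) hζ hζB
  have e1 : |∑ y, Γ y * ((1+ζ*lam x y) *
        (Real.log (1+ζ*lam x y) - Real.log (1+ζ*tP lam P₀ y)))| ≤ 8*B^2*ζ^2 := by
    have hzero : ∑ y, Γ y * (ζ*(lam x y - tP lam P₀ y)) = 0 := by
      have hr : ∑ y, Γ y * (ζ*(lam x y - tP lam P₀ y))
          = ζ*((∑ y, Γ y * lam x y) - ∑ y, Γ y * tP lam P₀ y) := by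
        rw [← Finset.sum_sub_distrib, Finset.mul_sum]
        exact Finset.sum_congr rfl fun y _ => by ring
      rw [hr, hlam x, tP_gamma hP₀ hlam]; ring
    have := single_est hΓ (U := fun y => (1+ζ*lam x y) *
        (Real.log (1+ζ*lam x y) - Real.log (1+ζ*tP lam P₀ y)))
      (V := fun y => ζ*(lam x y - tP lam P₀ y))
      (fun y => nu_pointwise1 hB1 (hB x y) (hsb y) hζ hζB)
    rw [hzero, sub_zero] at this
    exact this
  have hζ1 : ζ ≤ 1/2 := by nlinarith [mul_le_mul_of_nonneg_left hB1 hζ.le]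
  have hsq : (∑ y, Γ y * ((1+ζ*lam x y) *
        (Real.log (1+ζ*lam x y) - Real.log (1+ζ*tP lam P₀ y))))^2 ≤ 64*B^4*ζ^4 := by
    have h := pow_le_pow_left₀ (abs_nonneg _) e1 2
    rw [sq_abs] at h; nlinarith
  have habs := abs_le.1 e2
  have hB4 : B^3 ≤ B^4 := by nlinarith [pow_pos (lt_of_lt_of_le one_pos hB1) 3, hB1]
  have hz4 : ζ^4 ≤ ζ^3/2 := by nlinarith [pow_pos hζ 3]
  rw [abs_le]
  constructor
  · nlinarith [sq_nonneg (∑ y, Γ y * ((1+ζ*lam x y) *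
      (Real.log (1+ζ*lam x y) - Real.log (1+ζ*tP lam P₀ y)))), pow_pos hζ 3]
  · nlinarith [sq_nonneg (∑ y, Γ y * ((1+ζ*lam x y) *
      (Real.log (1+ζ*lam x y) - Real.log (1+ζ*tP lam P₀ y)))), pow_pos hζ 3]

end MainAux
end DispersionAux

/-- Lemma (Dispersion scaling for very noisy channels). -/
theorem vnc_dispersion_scaling
    {X Y : Type*} [Fintype X] [Fintype Y]
    (Γ : Y → ℝ) (hΓ : IsDist Γ) (hΓpos : ∀ y, 0 < Γ y)
    (lam : X → Y → ℝ) (hlam : ∀ x, ∑ y, Γ y * lam x y = 0) :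
    ∃ K : ℝ, 0 < K ∧ ∃ ζ₀ : ℝ, 0 < ζ₀ ∧ ∀ ζ : ℝ, ζ ∈ Set.Ioo 0 ζ₀ →
      |Vmin (VNC Γ lam ζ) - 2 * capacity (VNC Γ lam ζ)| ≤ K * ζ ^ 3 ∧
      |Vmin (VNC Γ lam ζ) - 2 * ζ ^ 2 * bigC Γ lam| ≤ K * ζ ^ 3 ∧
      |Vmax (VNC Γ lam ζ) - 2 * capacity (VNC Γ lam ζ)| ≤ K * ζ ^ 3 ∧
      |Vmax (VNC Γ lam ζ) - 2 * ζ ^ 2 * bigC Γ lam| ≤ K * ζ ^ 3 := by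
  obtain ⟨B, hB1, hB⟩ : ∃ B : ℝ, 1 ≤ B ∧ ∀ x y, |lam x y| ≤ B := by
    refine ⟨1 + ∑ x, ∑ y, |lam x y|, ?_, ?_⟩
    · have h0 : (0:ℝ) ≤ ∑ x, ∑ y, |lam x y| :=
        Finset.sum_nonneg fun x _ => Finset.sum_nonneg fun y _ => abs_nonneg _
      linarith
    · intro x y
      have h1 : |lam x y| ≤ ∑ y', |lam x y'| :=
        Finset.single_le_sum (f := fun y' => |lam x y'|)
          (fun y' _ => abs_nonneg _) (Finset.mem_univ y)
      have h2 : ∑ y', |lam x y'| ≤ ∑ x', ∑ y', |lam x' y'| :=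
        Finset.single_le_sum (f := fun x' => ∑ y', |lam x' y'|)
          (fun x' _ => Finset.sum_nonneg fun y' _ => abs_nonneg _) (Finset.mem_univ x)
      linarith
  have hBpos : (0:ℝ) < B := lt_of_lt_of_le one_pos hB1
  refine ⟨300*B^4, by positivity, 1/(2*B), by positivity, ?_⟩
  rintro ζ ⟨hζ0, hζu⟩
  have hζB : ζ * B ≤ 1/2 := by
    have h := (lt_div_iff₀ (by positivity : (0:ℝ) < 2*B)).1 hζu
    nlinarith
  have hKζ : (0:ℝ) < 300*B^4*ζ^3 := by positivity
  have hB43 : B^3*ζ^3 ≤ B^4*ζ^3 := by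
    have : B^3 ≤ B^4 := by nlinarith [pow_pos hBpos 3]
    nlinarith [pow_pos hζ0 3]
  rcases isEmpty_or_nonempty X with hX | hX
  · -- degenerate case: no input distributions exist
    have hnod : ∀ P : X → ℝ, ¬ IsDist P := by
      intro P hP
      have h := hP.2
      rw [Finset.univ_eq_empty, Finset.sum_empty] at h
      norm_num at h
    have hcap : capacity (VNC Γ lam ζ) = 0 := by
      unfold capacity
      have hset : {c | ∃ P : X → ℝ, IsDist P ∧ mutInfo P (VNC Γ lam ζ) = c} = ∅ := by
        ext c
        simp only [Set.mem_setOf_eq, Set.mem_empty_iff_false, iff_false, not_exists]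
        exact fun P h => hnod P h.1
      rw [hset, Real.sSup_empty]
    have hbigC : bigC Γ lam = 0 := by
      unfold bigC
      have hset : {c | ∃ P : X → ℝ, IsDist P ∧ c = 1 / 2 * ∑ y, Γ y *
          ((∑ x, P x * lam x y ^ 2) - (∑ x, P x * lam x y) ^ 2)} = ∅ := by
        ext c
        simp only [Set.mem_setOf_eq, Set.mem_empty_iff_false, iff_false, not_exists]
        exact fun P h => hnod P h.1
      rw [hset, Real.sSup_empty]
    have hachE : capacityAchievers (VNC Γ lam ζ) = ∅ := by
      ext P
      simp only [capacityAchievers, Set.mem_setOf_eq, Set.mem_empty_iff_false, iff_false]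
      exact fun h => hnod P h.1
    have hVset : {v | ∃ P ∈ capacityAchievers (VNC Γ lam ζ),
        v = ∑ x, P x * nu (VNC Γ lam ζ) x} = ∅ := by
      ext v
      simp only [Set.mem_setOf_eq, Set.mem_empty_iff_false, iff_false, not_exists]
      rintro P ⟨hPm, -⟩
      rw [hachE] at hPm
      exact Set.notMem_empty P hPm
    have hVmin : Vmin (VNC Γ lam ζ) = 0 := by
      unfold Vmin; rw [hVset, Real.sInf_empty]
    have hVmax : Vmax (VNC Γ lam ζ) = 0 := by
      unfold Vmax; rw [hVset, Real.sSup_empty]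
    rw [hVmin, hVmax, hcap, hbigC]
    norm_num
    exact hKζ.le
  · -- main case
    have hWpos : ∀ x y, 0 < VNC Γ lam ζ x y := fun x y => by
      have h := (one_add_bounds (B := B) hζ0 hζB (hB x y)).1
      have he : VNC Γ lam ζ x y = Γ y * (1 + ζ * lam x y) := rfl
      rw [he]
      exact mul_pos (hΓpos y) (by linarith)
    have hach : (capacityAchievers (VNC Γ lam ζ)).Nonempty := exists_achiever hWpos
    have hq : qStar (VNC Γ lam ζ) = outDist hach.choose (VNC Γ lam ζ) := by
      unfold qStar; exact dif_pos hach
    have hP₀mem : hach.choose ∈ capacityAchievers (VNC Γ lam ζ) := hach.choose_spec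
    have hP₀ : IsDist hach.choose := hP₀mem.1
    have hcap_est := cap_est (Γ := Γ) (lam := lam) hΓ hΓpos hB hζ0 hζB
    have hFlb : ∀ P, P ∈ capacityAchievers (VNC Γ lam ζ) →
        bigC Γ lam - 14*B^3*ζ ≤ Ff Γ lam P := by
      intro P hPm
      have h1 := abs_le.1 (mutInfo_est hΓ hΓpos hB hζ0 hζB hPm.1)
      have h2 : mutInfo P (VNC Γ lam ζ) = capacity (VNC Γ lam ζ) := hPm.2
      have h4 := abs_le.1 hcap_est
      have h5 : ζ^2 * (bigC Γ lam - 14*B^3*ζ) ≤ ζ^2 * Ff Γ lam P := by nlinarith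
      exact le_of_mul_le_mul_left h5 (by positivity)
    have hFub : ∀ P : X → ℝ, IsDist P → Ff Γ lam P ≤ bigC Γ lam :=
      fun P hP => le_bigC hΓ hB hP
    have hconc : ∀ P, P ∈ capacityAchievers (VNC Γ lam ζ) →
        ∑ y, Γ y * (tP lam P y - tP lam hach.choose y)^2 ≤ 112*B^3*ζ := by
      intro P hPm
      have hQ := mid_isDist hPm.1 hP₀
      have hid := Ff_mid_id (Γ := Γ) (lam := lam) (P := P) (Q := hach.choose)
      have h1 := hFub _ hQ
      have h2 := hFlb P hPm
      have h3 := hFlb _ hP₀mem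
      linarith [hid]
    have hnu : ∀ x, |nu (VNC Γ lam ζ) x
        - ζ^2 * ∑ y, Γ y * (lam x y - tP lam hach.choose y)^2| ≤ 104*B^4*ζ^3 :=
      nu_est hΓ hΓpos hlam hB1 hB hζ0 hζB hP₀ hq
    have hmain : ∀ P, P ∈ capacityAchievers (VNC Γ lam ζ) →
        |(∑ x, P x * nu (VNC Γ lam ζ) x) - 2*ζ^2*bigC Γ lam| ≤ 244*B^4*ζ^3 := by
      intro P hPm
      have hPd := hPm.1
      have e1 : |(∑ x, P x * nu (VNC Γ lam ζ) x)
          - ζ^2 * ∑ x, P x * ∑ y, Γ y * (lam x y - tP lam hach.choose y)^2|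
          ≤ 104*B^4*ζ^3 := by
        have e : (∑ x, P x * nu (VNC Γ lam ζ) x)
            - ζ^2 * ∑ x, P x * ∑ y, Γ y * (lam x y - tP lam hach.choose y)^2
            = ∑ x, P x * (nu (VNC Γ lam ζ) x
                - ζ^2 * ∑ y, Γ y * (lam x y - tP lam hach.choose y)^2) := by
          rw [Finset.mul_sum, ← Finset.sum_sub_distrib]
          exact Finset.sum_congr rfl fun x _ => by ring
        rw [e]
        exact weighted_abs_le P _ hPd.1 hPd.2 hnu
      have e2 := pg_id (Γ := Γ) (lam := lam) hPd (fun y => tP lam hach.choose y)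
      have e3 : 0 ≤ ∑ y, Γ y * (tP lam P y - tP lam hach.choose y)^2 :=
        Finset.sum_nonneg fun y _ => mul_nonneg (hΓ.1 y) (sq_nonneg _)
      have e4 := hconc P hPm
      have e5 := hFlb P hPm
      have e6 := hFub P hPd
      have m0 : ζ^2 * (∑ x, P x * ∑ y, Γ y * (lam x y - tP lam hach.choose y)^2)
          = 2 * (ζ^2 * Ff Γ lam P)
            + ζ^2 * ∑ y, Γ y * (tP lam P y - tP lam hach.choose y)^2 := by
        linear_combination ζ^2 * e2
      have m1 : ζ^2 * ∑ y, Γ y * (tP lam P y - tP lam hach.choose y)^2 ≤ 112*B^3*ζ^3 := by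
        nlinarith [mul_le_mul_of_nonneg_left e4 (sq_nonneg ζ)]
      have m2 : 0 ≤ ζ^2 * ∑ y, Γ y * (tP lam P y - tP lam hach.choose y)^2 :=
        mul_nonneg (sq_nonneg ζ) e3
      have m3 : ζ^2 * bigC Γ lam - ζ^2 * Ff Γ lam P ≤ 14*B^3*ζ^3 := by
        nlinarith [mul_le_mul_of_nonneg_left e5 (sq_nonneg ζ)]
      have m4 : ζ^2 * Ff Γ lam P - ζ^2 * bigC Γ lam ≤ 0 := by
        nlinarith [mul_le_mul_of_nonneg_left e6 (sq_nonneg ζ)]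
      have h1 := abs_le.1 e1
      rw [abs_le]
      constructor
      · nlinarith [hB43]
      · nlinarith [hB43]
    have hVne : Set.Nonempty {v | ∃ P ∈ capacityAchievers (VNC Γ lam ζ),
        v = ∑ x, P x * nu (VNC Γ lam ζ) x} :=
      ⟨_, hach.choose, hP₀mem, rfl⟩
    have hVbd : ∀ v ∈ {v | ∃ P ∈ capacityAchievers (VNC Γ lam ζ),
        v = ∑ x, P x * nu (VNC Γ lam ζ) x}, |v - 2*ζ^2*bigC Γ lam| ≤ 244*B^4*ζ^3 := by
      rintro v ⟨P, hPm, rfl⟩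
      exact hmain P hPm
    have hbb : BddBelow {v | ∃ P ∈ capacityAchievers (VNC Γ lam ζ),
        v = ∑ x, P x * nu (VNC Γ lam ζ) x} := by
      refine ⟨2*ζ^2*bigC Γ lam - 244*B^4*ζ^3, fun v hv => ?_⟩
      have h := (abs_le.1 (hVbd v hv)).1
      linarith
    have hba : BddAbove {v | ∃ P ∈ capacityAchievers (VNC Γ lam ζ),
        v = ∑ x, P x * nu (VNC Γ lam ζ) x} := by
      refine ⟨2*ζ^2*bigC Γ lam + 244*B^4*ζ^3, fun v hv => ?_⟩
      have h := (abs_le.1 (hVbd v hv)).2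
      linarith
    have hVmin1 : 2*ζ^2*bigC Γ lam - 244*B^4*ζ^3 ≤ Vmin (VNC Γ lam ζ) :=
      le_csInf hVne fun v hv => by have h := (abs_le.1 (hVbd v hv)).1; linarith
    have hVmin2 : Vmin (VNC Γ lam ζ) ≤ 2*ζ^2*bigC Γ lam + 244*B^4*ζ^3 := by
      obtain ⟨v, hv⟩ := hVne
      have h1 : Vmin (VNC Γ lam ζ) ≤ v := csInf_le hbb hv
      have h2 := (abs_le.1 (hVbd v hv)).2
      linarith
    have hVmax1 : 2*ζ^2*bigC Γ lam - 244*B^4*ζ^3 ≤ Vmax (VNC Γ lam ζ) := by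
      obtain ⟨v, hv⟩ := hVne
      have h1 : v ≤ Vmax (VNC Γ lam ζ) := le_csSup hba hv
      have h2 := (abs_le.1 (hVbd v hv)).1
      linarith
    have hVmax2 : Vmax (VNC Γ lam ζ) ≤ 2*ζ^2*bigC Γ lam + 244*B^4*ζ^3 :=
      csSup_le hVne fun v hv => by have h := (abs_le.1 (hVbd v hv)).2; linarith
    have hc := abs_le.1 hcap_est
    refine ⟨?_, ?_, ?_, ?_⟩ <;> rw [abs_le] <;> constructor <;>
      first
        | linarith [hB43]
        | nlinarith [hB43]

end Paper
end
end
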